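/- arXiv:1601.00856 — 4 statements merged into one kernel-verified Lean document; each statement's English description precedes it below -/
import Mathlib

section
/- Let α ∈ [1,2]. There exist constants C > 0 and k₀ ∈ ℕ depending only on α such that the following holds. Let H₁, H₂ be dyadic numbers with H₁ ≥ 2^{k₀} H₂; let g₁, g₂ : ℝ² → [0,∞) be L² functions supported in Δ_{H₁} and Δ_{H₂} respectively, and let g : ℝ³ → [0,∞) be an L² function. Then ∫_{ℝ²×ℝ²} g₁(ζ₁) g₂(ζ₂) g(Ω(ζ₁,ζ₂), ζ₁+ζ₂) dζ₁ dζ₂ ≤ C H₁^{−1/2} H₂^{1/4} ‖g₁‖_{L²(ℝ²)} ‖g₂‖_{L²(ℝ²)} ‖g‖_{L²(ℝ³)}. -/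
/-!
Write `T(ζ₁, ζ₂) = (Ω(ζ₁, ζ₂), ζ₁ + ζ₂)`. By Cauchy–Schwarz, pairing `g₁ ⊗ g₂` with `g ∘ T`, it
suffices that the push-forward of Lebesgue measure on `Δ_{H₁} × Δ_{H₂}` under `T` has density
`≲ H₂^{1/2} / H₁`. Shear to `ζ = ζ₁ + ζ₂` and write `ζ₂ = (x, μ₂)`: for fixed `ζ = (ξ, μ)` and
`μ₂`, the map `x ↦ Ω(ζ - ζ₂, ζ₂)` has derivative `h(ζ₁) - h(ζ₂) ≥ H₁/2 - 2H₂ ≥ H₁/4` on each side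
of `x = ξ`, so each line contributes `≲ 1/H₁`; and `μ₂² ≤ h(ζ₂) ≤ 2H₂` confines `μ₂` to an interval
of length `≲ H₂^{1/2}`.
-/

open MeasureTheory Set Function

noncomputable section

def IsDyadic (x : ℝ) : Prop := ∃ k : ℕ, x = 2 ^ k

def omegaBOZK (α : ℝ) (ζ : ℝ × ℝ) : ℝ := ζ.1 * (|ζ.1| ^ α + ζ.2 ^ 2)

def hBOZK (α : ℝ) (ζ : ℝ × ℝ) : ℝ := (α + 1) * |ζ.1| ^ α + ζ.2 ^ 2

def ISet (N : ℝ) : Set ℝ := if N = 1 then Icc (-2) 2 else {ξ | N / 2 ≤ |ξ| ∧ |ξ| ≤ 2 * N}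

def DeltaSet (α H : ℝ) : Set (ℝ × ℝ) := {ζ | hBOZK α ζ ∈ ISet H}

def DSet (α H L : ℝ) : Set (ℝ × ℝ × ℝ) :=
  {z | z.2 ∈ DeltaSet α H ∧ |z.1 + omegaBOZK α z.2| ≤ L}

/-- Resonance function `Ω(ζ₁,ζ₂) = ω(ζ₁+ζ₂) - ω(ζ₁) - ω(ζ₂)`. -/
def OmegaRes (α : ℝ) (ζ₁ ζ₂ : ℝ × ℝ) : ℝ :=
  omegaBOZK α (ζ₁ + ζ₂) - omegaBOZK α ζ₁ - omegaBOZK α ζ₂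

open Filter
open scoped ENNReal Topology

lemma hasDerivAt_mul_abs_rpow {α : ℝ} (hα : 0 < α) (x : ℝ) :
    HasDerivAt (fun y : ℝ => y * |y| ^ α) ((α + 1) * |x| ^ α) x := by
  rcases lt_trichotomy x 0 with hx | rfl | hx
  · have h : HasDerivAt (fun y : ℝ => -(-y) ^ (α + 1)) ((α + 1) * (-x) ^ α) x := by
      simpa [Function.comp_def, Pi.neg_def] using
        ((Real.hasDerivAt_rpow_const (p := α + 1) (Or.inl (neg_pos.2 hx).ne')).comp x
          (hasDerivAt_neg x)).neg
    rw [abs_of_neg hx]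
    refine h.congr_of_eventuallyEq ?_
    filter_upwards [eventually_lt_nhds hx] with y hy
    rw [abs_of_neg hy, Real.rpow_add_one (neg_pos.2 hy).ne']
    ring
  · rw [hasDerivAt_iff_tendsto_slope, abs_zero, Real.zero_rpow hα.ne', mul_zero]
    have h : Tendsto (fun y : ℝ => |y| ^ α) (𝓝 0) (𝓝 0) :=
      (continuous_abs.rpow_const fun _ => Or.inr hα.le).tendsto' 0 0
        (by simp [Real.zero_rpow hα.ne'])
    refine (h.mono_left nhdsWithin_le_nhds).congr' ?_
    filter_upwards [self_mem_nhdsWithin] with y hy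
    have hy : y ≠ 0 := hy
    simp only [slope, sub_zero, abs_zero, zero_mul, vsub_eq_sub, smul_eq_mul]
    field_simp
  · have h : HasDerivAt (fun y : ℝ => y ^ (α + 1)) ((α + 1) * x ^ α) x := by
      simpa using Real.hasDerivAt_rpow_const (p := α + 1) (Or.inl hx.ne')
    rw [abs_of_pos hx]
    refine h.congr_of_eventuallyEq ?_
    filter_upwards [eventually_gt_nhds hx] with y hy
    rw [abs_of_pos hy, Real.rpow_add_one hy.ne']
    ring

lemma setLIntegral_comp_le_of_le_deriv {Ψ Ψ' : ℝ → ℝ} (hΨ : ∀ x, HasDerivAt Ψ (Ψ' x) x)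
    {A J : Set ℝ} (hA : MeasurableSet A) (hJ : OrdConnected J) (hAJ : A ⊆ J) {c : ℝ}
    (hc : 0 < c) (hΨ' : ∀ x ∈ J, c ≤ Ψ' x) (G : ℝ → ℝ≥0∞) :
    ∫⁻ x in A, G (Ψ x) ≤ ENNReal.ofReal c⁻¹ * ∫⁻ τ, G τ := by
  have hmono : StrictMonoOn Ψ J :=
    strictMonoOn_of_hasDerivWithinAt_pos hJ.convex
      (fun x _ => (hΨ x).continuousAt.continuousWithinAt)
      (fun x _ => (hΨ x).hasDerivWithinAt)
      (fun x hx => hc.trans_le (hΨ' x (interior_subset hx)))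
  have hchange := lintegral_image_eq_lintegral_abs_deriv_mul hA
    (fun x _ => (hΨ x).hasDerivWithinAt) (hmono.injOn.mono hAJ) G
  have hcoef : ∀ x ∈ A, (1 : ℝ≥0∞) ≤ ENNReal.ofReal c⁻¹ * ENNReal.ofReal |Ψ' x| := by
    intro x hx
    have hle := hΨ' x (hAJ hx)
    rw [← ENNReal.ofReal_mul (by positivity), ENNReal.one_le_ofReal,
      abs_of_pos (hc.trans_le hle), inv_mul_eq_div, one_le_div hc]
    exact hle
  calc ∫⁻ x in A, G (Ψ x)
      ≤ ∫⁻ x in A, ENNReal.ofReal c⁻¹ * (ENNReal.ofReal |Ψ' x| * G (Ψ x)) := by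
        refine setLIntegral_mono' hA fun x hx => ?_
        rw [← mul_assoc]
        exact le_mul_of_one_le_left' (hcoef x hx)
    _ = ENNReal.ofReal c⁻¹ * ∫⁻ τ in Ψ '' A, G τ := by
        rw [lintegral_const_mul' _ _ ENNReal.ofReal_ne_top, hchange]
    _ ≤ ENNReal.ofReal c⁻¹ * ∫⁻ τ, G τ := by
        gcongr
        exact Measure.restrict_le_self

lemma eLpNorm_two_eq_lintegral {W : Type*} [MeasurableSpace W] (m : Measure W) (F : W → ℝ≥0∞) :
    eLpNorm F 2 m = (∫⁻ w, F w ^ (2 : ℝ) ∂m) ^ (1 / 2 : ℝ) := by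
  simp [eLpNorm_eq_lintegral_rpow_enorm_toReal]

lemma setLIntegral_mul_mul_comp_le {X Y Z : Type*} [MeasurableSpace X] [MeasurableSpace Y]
    [MeasurableSpace Z] {μ : Measure X} {ν : Measure Y} [SFinite ν] {ρ : Measure Z}
    {s : Set (X × Y)} {T : X × Y → Z} (hT : Measurable T) {K : ℝ≥0∞}
    (hK : ∀ G : Z → ℝ≥0∞, Measurable G → ∫⁻ q in s, G (T q) ∂μ.prod ν ≤ K * ∫⁻ z, G z ∂ρ)
    {F₁ : X → ℝ≥0∞} {F₂ : Y → ℝ≥0∞} {G : Z → ℝ≥0∞} (hF₁ : Measurable F₁)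
    (hF₂ : Measurable F₂) (hG : Measurable G) :
    ∫⁻ q in s, F₁ q.1 * F₂ q.2 * G (T q) ∂μ.prod ν
      ≤ K ^ (1 / 2 : ℝ) * eLpNorm F₁ 2 μ * eLpNorm F₂ 2 ν * eLpNorm G 2 ρ := by
  have hprod : ∫⁻ q in s, (F₁ q.1 * F₂ q.2) ^ (2 : ℝ) ∂μ.prod ν
      ≤ (∫⁻ x, F₁ x ^ (2 : ℝ) ∂μ) * ∫⁻ y, F₂ y ^ (2 : ℝ) ∂ν := by
    simp_rw [ENNReal.mul_rpow_of_nonneg _ _ zero_le_two]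
    exact (setLIntegral_le_lintegral _ _).trans_eq
      (lintegral_prod_mul (hF₁.pow_const _).aemeasurable (hF₂.pow_const _).aemeasurable)
  calc ∫⁻ q in s, F₁ q.1 * F₂ q.2 * G (T q) ∂μ.prod ν
      ≤ (∫⁻ q in s, (F₁ q.1 * F₂ q.2) ^ (2 : ℝ) ∂μ.prod ν) ^ (1 / 2 : ℝ)
          * (∫⁻ q in s, G (T q) ^ (2 : ℝ) ∂μ.prod ν) ^ (1 / 2 : ℝ) :=
        ENNReal.lintegral_mul_le_Lp_mul_Lq _ .two_two (by fun_prop) (by fun_prop)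
    _ ≤ ((∫⁻ x, F₁ x ^ (2 : ℝ) ∂μ) * ∫⁻ y, F₂ y ^ (2 : ℝ) ∂ν) ^ (1 / 2 : ℝ)
          * (K * ∫⁻ z, G z ^ (2 : ℝ) ∂ρ) ^ (1 / 2 : ℝ) := by
        gcongr
        exact hK (fun z => G z ^ (2 : ℝ)) (by fun_prop)
    _ = K ^ (1 / 2 : ℝ) * eLpNorm F₁ 2 μ * eLpNorm F₂ 2 ν * eLpNorm G 2 ρ := by
        simp only [eLpNorm_two_eq_lintegral, ENNReal.mul_rpow_of_nonneg _ _ one_half_pos.le]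
        ring

lemma MeasureTheory.AEStronglyMeasurable.exists_measurable_enorm_le {W E : Type*}
    [MeasurableSpace W] {m : Measure W} [NormedAddCommGroup E] {f : W → E}
    (hf : AEStronglyMeasurable f m) (p : ℝ≥0∞) :
    ∃ F : W → ℝ≥0∞, Measurable F ∧ (∀ x, ‖f x‖ₑ ≤ F x) ∧ eLpNorm F p m = eLpNorm f p m := by
  have h := hf.enorm
  set N := toMeasurable m {x | ‖f x‖ₑ ≠ h.mk _ x}
  have hN : m N = 0 := by rw [measure_toMeasurable]; exact ae_iff.1 h.ae_eq_mk
  refine ⟨N.indicator ⊤ + h.mk _,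
    (measurable_const.indicator (measurableSet_toMeasurable _ _)).add h.measurable_mk,
    fun x => ?_, eLpNorm_congr_enorm_ae ?_⟩
  · by_cases hx : x ∈ N
    · simp [indicator_of_mem hx]
    · rw [Pi.add_apply, indicator_of_notMem hx, zero_add]
      exact (not_not.1 fun hne => hx (subset_toMeasurable _ _ hne)).le
  · filter_upwards [measure_eq_zero_iff_ae_notMem.1 hN, h.ae_eq_mk] with x hx hfx
    rw [enorm_eq_self, Pi.add_apply, indicator_of_notMem hx, zero_add, ← hfx]

lemma enorm_integral_mul_mul_comp_le {X Y Z : Type*} [MeasurableSpace X] [MeasurableSpace Y]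
    [MeasurableSpace Z] {μ : Measure X} {ν : Measure Y} [SFinite ν] {ρ : Measure Z}
    {s₁ : Set X} {s₂ : Set Y} (hs₁ : MeasurableSet s₁) (hs₂ : MeasurableSet s₂)
    {T : X × Y → Z} (hT : Measurable T) {K : ℝ≥0∞}
    (hK : ∀ G : Z → ℝ≥0∞, Measurable G →
      ∫⁻ q in s₁ ×ˢ s₂, G (T q) ∂μ.prod ν ≤ K * ∫⁻ z, G z ∂ρ)
    {g₁ : X → ℝ} {g₂ : Y → ℝ} {g : Z → ℝ} (hg₁ : AEStronglyMeasurable g₁ μ)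
    (hg₂ : AEStronglyMeasurable g₂ ν) (hg : AEStronglyMeasurable g ρ)
    (hsupp₁ : support g₁ ⊆ s₁) (hsupp₂ : support g₂ ⊆ s₂) :
    ‖∫ q, g₁ q.1 * g₂ q.2 * g (T q) ∂μ.prod ν‖ₑ
      ≤ K ^ (1 / 2 : ℝ) * eLpNorm g₁ 2 μ * eLpNorm g₂ 2 ν * eLpNorm g 2 ρ := by
  -- Majorants valid everywhere spare us showing that `g ∘ T` depends only on the a.e. class of `g`.
  obtain ⟨F₁, hF₁, hgF₁, hF₁g⟩ := hg₁.exists_measurable_enorm_le 2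
  obtain ⟨F₂, hF₂, hgF₂, hF₂g⟩ := hg₂.exists_measurable_enorm_le 2
  obtain ⟨F, hF, hgF, hFg⟩ := hg.exists_measurable_enorm_le 2
  have hpointwise : ∀ q, ‖g₁ q.1 * g₂ q.2 * g (T q)‖ₑ
      ≤ (s₁ ×ˢ s₂).indicator (fun q => F₁ q.1 * F₂ q.2 * F (T q)) q := by
    intro q
    by_cases hq : q ∈ s₁ ×ˢ s₂
    · rw [indicator_of_mem hq, enorm_mul, enorm_mul]
      exact mul_le_mul' (mul_le_mul' (hgF₁ _) (hgF₂ _)) (hgF _)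
    · have hzero : g₁ q.1 = 0 ∨ g₂ q.2 = 0 := by
        by_contra! h
        exact hq ⟨hsupp₁ h.1, hsupp₂ h.2⟩
      rcases hzero with h | h <;> simp [h]
  rw [← hF₁g, ← hF₂g, ← hFg]
  calc ‖∫ q, g₁ q.1 * g₂ q.2 * g (T q) ∂μ.prod ν‖ₑ
      ≤ ∫⁻ q in s₁ ×ˢ s₂, F₁ q.1 * F₂ q.2 * F (T q) ∂μ.prod ν :=
        (enorm_integral_le_lintegral_enorm _).trans <|
          (lintegral_mono hpointwise).trans_eq (lintegral_indicator (hs₁.prod hs₂) _)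
    _ ≤ _ := setLIntegral_mul_mul_comp_le hT hK hF₁ hF₂ hF

section Dispersion

variable {α : ℝ}

lemma hasDerivAt_omegaBOZK_fst (hα : 0 < α) (x μ : ℝ) :
    HasDerivAt (fun y => omegaBOZK α (y, μ)) (hBOZK α (x, μ)) x := by
  have h := (hasDerivAt_mul_abs_rpow hα x).add ((hasDerivAt_id' x).mul_const (μ ^ 2))
  rw [one_mul] at h
  refine h.congr_of_eventuallyEq (Eventually.of_forall fun y => ?_)
  simp only [omegaBOZK, Pi.add_apply]
  ring

lemma hasDerivAt_omegaRes_fiber (hα : 0 < α) (ξ μ μ₂ x : ℝ) :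
    HasDerivAt (fun y => OmegaRes α (ξ - y, μ - μ₂) (y, μ₂))
      (hBOZK α (ξ - x, μ - μ₂) - hBOZK α (x, μ₂)) x := by
  have h := ((hasDerivAt_omegaBOZK_fst hα (ξ - x) (μ - μ₂)).comp x
    ((hasDerivAt_id' x).const_sub ξ)).const_sub (omegaBOZK α (ξ, μ))
  rw [mul_neg_one, neg_neg] at h
  refine (h.sub (hasDerivAt_omegaBOZK_fst hα x μ₂)).congr_of_eventuallyEq
    (Eventually.of_forall fun y => ?_)
  simp [OmegaRes]

lemma continuous_omegaBOZK (hα : 0 ≤ α) : Continuous (omegaBOZK α) := by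
  unfold omegaBOZK
  fun_prop (disch := exact fun _ => Or.inr hα)

lemma continuous_hBOZK (hα : 0 ≤ α) : Continuous (hBOZK α) := by
  unfold hBOZK
  fun_prop (disch := exact fun _ => Or.inr hα)

lemma continuous_omegaRes (hα : 0 ≤ α) :
    Continuous fun q : (ℝ × ℝ) × (ℝ × ℝ) => OmegaRes α q.1 q.2 := by
  have h := continuous_omegaBOZK hα
  unfold OmegaRes
  fun_prop

lemma hBOZK_nonneg (hα : 0 ≤ α) (ζ : ℝ × ℝ) : 0 ≤ hBOZK α ζ := by
  unfold hBOZK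
  positivity

lemma hBOZK_le_hBOZK (hα : 0 ≤ α) {a b : ℝ} (hab : |a| ≤ |b|) (μ : ℝ) :
    hBOZK α (a, μ) ≤ hBOZK α (b, μ) := by
  unfold hBOZK
  gcongr

lemma measurableSet_deltaSet (hα : 0 ≤ α) (H : ℝ) : MeasurableSet (DeltaSet α H) := by
  refine measurableSet_preimage (continuous_hBOZK hα).measurable ?_
  unfold ISet
  split_ifs
  · exact measurableSet_Icc
  · exact (measurableSet_le measurable_const measurable_abs).inter
      (measurableSet_le measurable_abs measurable_const)

lemma hBOZK_le_of_mem_deltaSet {H : ℝ} {ζ : ℝ × ℝ} (h : ζ ∈ DeltaSet α H) :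
    hBOZK α ζ ≤ 2 * H := by
  simp only [DeltaSet, ISet, mem_ofPred_eq] at h
  split_ifs at h with hH
  · linarith [h.2]
  · exact (le_abs_self _).trans h.2

lemma le_hBOZK_of_mem_deltaSet (hα : 0 ≤ α) {H : ℝ} (hH : H ≠ 1) {ζ : ℝ × ℝ}
    (h : ζ ∈ DeltaSet α H) : H / 2 ≤ hBOZK α ζ := by
  simp only [DeltaSet, ISet, mem_ofPred_eq, if_neg hH] at h
  simpa [abs_of_nonneg (hBOZK_nonneg hα ζ)] using h.1

lemma sq_snd_le_of_mem_deltaSet (hα : 0 ≤ α) {H : ℝ} {ζ : ℝ × ℝ} (h : ζ ∈ DeltaSet α H) :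
    ζ.2 ^ 2 ≤ 2 * H := by
  have hle := hBOZK_le_of_mem_deltaSet h
  have hfst : 0 ≤ (α + 1) * |ζ.1| ^ α := by positivity
  unfold hBOZK at hle
  linarith

lemma ordConnected_hBOZK_le (hα : 0 ≤ α) (μ c : ℝ) :
    OrdConnected {x | hBOZK α (x, μ) ≤ c} := by
  refine ⟨fun a ha b hb z hz => ?_⟩
  rcases le_total |a| |b| with h | h
  · exact (hBOZK_le_hBOZK hα ((abs_le_max_abs_abs hz.1 hz.2).trans_eq (max_eq_right h)) μ).trans hb
  · exact (hBOZK_le_hBOZK hα ((abs_le_max_abs_abs hz.1 hz.2).trans_eq (max_eq_left h)) μ).trans ha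

lemma ordConnected_le_hBOZK_sub_of_le (hα : 0 ≤ α) (ξ μ c : ℝ) :
    OrdConnected {x | x ≤ ξ ∧ c ≤ hBOZK α (ξ - x, μ)} := by
  refine ⟨fun a _ b hb z hz => ⟨hz.2.trans hb.1, hb.2.trans (hBOZK_le_hBOZK hα ?_ μ)⟩⟩
  rw [abs_of_nonneg (sub_nonneg.2 hb.1), abs_of_nonneg (sub_nonneg.2 (hz.2.trans hb.1))]
  linarith [hz.2]

lemma ordConnected_le_hBOZK_sub_of_ge (hα : 0 ≤ α) (ξ μ c : ℝ) :
    OrdConnected {x | ξ ≤ x ∧ c ≤ hBOZK α (ξ - x, μ)} := by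
  refine ⟨fun a ha b _ z hz => ⟨ha.1.trans hz.1, ha.2.trans (hBOZK_le_hBOZK hα ?_ μ)⟩⟩
  rw [abs_of_nonpos (sub_nonpos.2 ha.1), abs_of_nonpos (sub_nonpos.2 (ha.1.trans hz.1))]
  linarith [hz.1]

end Dispersion

def resonanceFiber (α H₁ H₂ ξ μ μ₂ : ℝ) : Set ℝ :=
  {x | (ξ - x, μ - μ₂) ∈ DeltaSet α H₁ ∧ (x, μ₂) ∈ DeltaSet α H₂}

lemma measurableSet_resonanceFiber {α : ℝ} (hα : 0 ≤ α) (H₁ H₂ ξ μ μ₂ : ℝ) :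
    MeasurableSet (resonanceFiber α H₁ H₂ ξ μ μ₂) :=
  ((measurableSet_deltaSet hα H₁).preimage (by fun_prop)).inter
    ((measurableSet_deltaSet hα H₂).preimage (by fun_prop))

lemma setLIntegral_omegaRes_fiber_le {α H₁ H₂ : ℝ} (hα : 0 < α) (hH₂ : 1 ≤ H₂)
    (hH : 8 * H₂ ≤ H₁) (ξ μ μ₂ : ℝ) (G : ℝ → ℝ≥0∞) :
    ∫⁻ x in resonanceFiber α H₁ H₂ ξ μ μ₂, G (OmegaRes α (ξ - x, μ - μ₂) (x, μ₂))
      ≤ ENNReal.ofReal (8 / H₁) * ∫⁻ τ, G τ := by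
  set A := resonanceFiber α H₁ H₂ ξ μ μ₂
  have hH₁ : 0 < H₁ := by linarith
  have hA : MeasurableSet A := measurableSet_resonanceFiber hα.le H₁ H₂ ξ μ μ₂
  -- The slope `h(ζ₁) - h(ζ₂)` is `≥ H₁ / 4` on `A`, but to get injectivity we need an interval,
  -- and any interval containing `A` may cross `x = ξ`, where `h(ζ₁)` is small: split there.
  have hside : ∀ B J : Set ℝ, MeasurableSet B → OrdConnected J →
      B ⊆ J → J ⊆ {x | H₁ / 2 ≤ hBOZK α (ξ - x, μ - μ₂) ∧ hBOZK α (x, μ₂) ≤ 2 * H₂} →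
      ∫⁻ x in B, G (OmegaRes α (ξ - x, μ - μ₂) (x, μ₂))
        ≤ ENNReal.ofReal (4 / H₁) * ∫⁻ τ, G τ := by
    intro B J hB hJ hBJ hJ'
    rw [show 4 / H₁ = (H₁ / 4)⁻¹ by rw [inv_div]]
    refine setLIntegral_comp_le_of_le_deriv (hasDerivAt_omegaRes_fiber hα ξ μ μ₂) hB hJ hBJ
      (by positivity) (fun x hx => ?_) G
    obtain ⟨h₁, h₂⟩ := hJ' hx
    linarith
  have hA_sub : ∀ x ∈ A, H₁ / 2 ≤ hBOZK α (ξ - x, μ - μ₂) ∧ hBOZK α (x, μ₂) ≤ 2 * H₂ :=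
    fun x hx => ⟨le_hBOZK_of_mem_deltaSet hα.le (by linarith) hx.1,
      hBOZK_le_of_mem_deltaSet hx.2⟩
  have hleft := hside _ _ (hA.inter measurableSet_Iic)
    ((ordConnected_le_hBOZK_sub_of_le hα.le _ _ _).inter (ordConnected_hBOZK_le hα.le _ _))
    (fun x hx => ⟨⟨hx.2, (hA_sub x hx.1).1⟩, (hA_sub x hx.1).2⟩)
    (fun x hx => ⟨hx.1.2, hx.2⟩)
  have hright := hside _ _ (hA.inter measurableSet_Ici)
    ((ordConnected_le_hBOZK_sub_of_ge hα.le _ _ _).inter (ordConnected_hBOZK_le hα.le _ _))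
    (fun x hx => ⟨⟨hx.2, (hA_sub x hx.1).1⟩, (hA_sub x hx.1).2⟩)
    (fun x hx => ⟨hx.1.2, hx.2⟩)
  calc ∫⁻ x in A, G (OmegaRes α (ξ - x, μ - μ₂) (x, μ₂))
      = ∫⁻ x in A ∩ Iic ξ ∪ A ∩ Ici ξ, G (OmegaRes α (ξ - x, μ - μ₂) (x, μ₂)) := by
        rw [← inter_union_distrib_left, Iic_union_Ici, inter_univ]
    _ ≤ ENNReal.ofReal (4 / H₁) * (∫⁻ τ, G τ) + ENNReal.ofReal (4 / H₁) * ∫⁻ τ, G τ :=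
        (lintegral_union_le _ _ _).trans (add_le_add hleft hright)
    _ = ENNReal.ofReal (8 / H₁) * ∫⁻ τ, G τ := by
        rw [← add_mul, ← ENNReal.ofReal_add (by positivity) (by positivity)]
        ring_nf

lemma lintegral_omegaRes_slice_le {α H₁ H₂ : ℝ} (hα : 0 < α) (hH₂ : 1 ≤ H₂)
    (hH : 8 * H₂ ≤ H₁) {G : ℝ × ℝ × ℝ → ℝ≥0∞} (hG : Measurable G) (ζ : ℝ × ℝ) :
    ∫⁻ ζ₂, (DeltaSet α H₁ ×ˢ DeltaSet α H₂).indicator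
        (fun q => G (OmegaRes α q.1 q.2, q.1 + q.2)) (ζ - ζ₂, ζ₂)
      ≤ ENNReal.ofReal (16 * √(2 * H₂) / H₁) * ∫⁻ τ, G (τ, ζ) := by
  obtain ⟨ξ, μ⟩ := ζ
  have hΔ := (measurableSet_deltaSet hα.le H₁).prod (measurableSet_deltaSet hα.le H₂)
  have hmeas : Measurable fun ζ₂ : ℝ × ℝ => (DeltaSet α H₁ ×ˢ DeltaSet α H₂).indicator
      (fun q => G (OmegaRes α q.1 q.2, q.1 + q.2)) ((ξ, μ) - ζ₂, ζ₂) :=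
    ((hG.comp ((continuous_omegaRes hα.le).prodMk (by fun_prop)).measurable).indicator
      hΔ).comp (by fun_prop)
  set r := √(2 * H₂)
  have hfiber : ∀ μ₂, ∫⁻ x, (DeltaSet α H₁ ×ˢ DeltaSet α H₂).indicator
      (fun q => G (OmegaRes α q.1 q.2, q.1 + q.2)) ((ξ, μ) - (x, μ₂), (x, μ₂))
        ≤ (Icc (-r) r).indicator (fun _ => ENNReal.ofReal (8 / H₁) * ∫⁻ τ, G (τ, (ξ, μ))) μ₂ := by
    intro μ₂
    have hslice : ∀ x, (DeltaSet α H₁ ×ˢ DeltaSet α H₂).indicator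
        (fun q => G (OmegaRes α q.1 q.2, q.1 + q.2)) ((ξ, μ) - (x, μ₂), (x, μ₂))
          = (resonanceFiber α H₁ H₂ ξ μ μ₂).indicator
            (fun x => G (OmegaRes α (ξ - x, μ - μ₂) (x, μ₂), (ξ, μ))) x := by
      intro x
      by_cases hx : x ∈ resonanceFiber α H₁ H₂ ξ μ μ₂
      · rw [indicator_of_mem hx, indicator_of_mem (show _ ∈ _ ×ˢ _ from hx)]
        simp
      · rw [indicator_of_notMem hx, indicator_of_notMem (show _ ∉ _ ×ˢ _ from hx)]
    rw [lintegral_congr hslice, lintegral_indicator (measurableSet_resonanceFiber hα.le _ _ _ _ _)]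
    by_cases hμ₂ : μ₂ ∈ Icc (-r) r
    · rw [indicator_of_mem hμ₂]
      exact setLIntegral_omegaRes_fiber_le hα hH₂ hH ξ μ μ₂ _
    · rw [indicator_of_notMem hμ₂]
      suffices resonanceFiber α H₁ H₂ ξ μ μ₂ = ∅ by simp [this]
      refine eq_empty_of_forall_notMem fun x hx => hμ₂ ?_
      exact abs_le.1 (Real.abs_le_sqrt (sq_snd_le_of_mem_deltaSet hα.le hx.2))
  calc ∫⁻ ζ₂, (DeltaSet α H₁ ×ˢ DeltaSet α H₂).indicator
        (fun q => G (OmegaRes α q.1 q.2, q.1 + q.2)) ((ξ, μ) - ζ₂, ζ₂)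
      ≤ ∫⁻ μ₂, (Icc (-r) r).indicator
          (fun _ => ENNReal.ofReal (8 / H₁) * ∫⁻ τ, G (τ, (ξ, μ))) μ₂ := by
        rw [Measure.volume_eq_prod, lintegral_prod_symm' _ hmeas]
        exact lintegral_mono hfiber
    _ = ENNReal.ofReal (16 * r / H₁) * ∫⁻ τ, G (τ, (ξ, μ)) := by
        have hH₁ : 0 < H₁ := by linarith
        rw [lintegral_indicator_const measurableSet_Icc, Real.volume_Icc, mul_right_comm,
          ← ENNReal.ofReal_mul (by positivity)]
        ring_nf

lemma setLIntegral_comp_omegaRes_le {α H₁ H₂ : ℝ} (hα : 0 < α) (hH₂ : 1 ≤ H₂)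
    (hH : 8 * H₂ ≤ H₁) {G : ℝ × ℝ × ℝ → ℝ≥0∞} (hG : Measurable G) :
    ∫⁻ q in DeltaSet α H₁ ×ˢ DeltaSet α H₂, G (OmegaRes α q.1 q.2, q.1 + q.2)
      ≤ ENNReal.ofReal (16 * √(2 * H₂) / H₁) * ∫⁻ z, G z := by
  set Φ := (DeltaSet α H₁ ×ˢ DeltaSet α H₂).indicator
    fun q : (ℝ × ℝ) × (ℝ × ℝ) => G (OmegaRes α q.1 q.2, q.1 + q.2)
  have hΦ : Measurable Φ :=
    (hG.comp ((continuous_omegaRes hα.le).prodMk (by fun_prop)).measurable).indicator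
      ((measurableSet_deltaSet hα.le H₁).prod (measurableSet_deltaSet hα.le H₂))
  calc ∫⁻ q in DeltaSet α H₁ ×ˢ DeltaSet α H₂, G (OmegaRes α q.1 q.2, q.1 + q.2)
      = ∫⁻ ζ, ∫⁻ ζ₂, Φ (ζ - ζ₂, ζ₂) := by
        rw [← lintegral_indicator ((measurableSet_deltaSet hα.le H₁).prod
            (measurableSet_deltaSet hα.le H₂)), Measure.volume_eq_prod,
          ← (measurePreserving_sub_prod volume volume).lintegral_comp hΦ]
        exact lintegral_prod (fun p => Φ (p.1 - p.2, p.2)) (hΦ.comp (by fun_prop)).aemeasurable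
    _ ≤ ∫⁻ ζ, ENNReal.ofReal (16 * √(2 * H₂) / H₁) * ∫⁻ τ, G (τ, ζ) :=
        lintegral_mono fun ζ => lintegral_omegaRes_slice_le hα hH₂ hH hG ζ
    _ = ENNReal.ofReal (16 * √(2 * H₂) / H₁) * ∫⁻ z, G z := by
        rw [lintegral_const_mul _ (by fun_prop), Measure.volume_eq_prod (α := ℝ) (β := ℝ × ℝ),
          lintegral_prod_symm G hG.aemeasurable]

lemma sqrt_resonance_constant_le {H₁ H₂ : ℝ} (hH₁ : 0 < H₁) (hH₂ : 0 < H₂) :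
    ENNReal.ofReal (16 * √(2 * H₂) / H₁) ^ (1 / 2 : ℝ)
      ≤ ENNReal.ofReal (6 * H₁ ^ (-(1:ℝ) / 2) * H₂ ^ ((1:ℝ) / 4)) := by
  rw [ENNReal.ofReal_rpow_of_nonneg (by positivity) one_half_pos.le, ← Real.sqrt_eq_rpow]
  refine ENNReal.ofReal_le_ofReal (Real.sqrt_le_iff.2 ⟨by positivity, ?_⟩)
  have h₁ : (H₁ ^ (-(1:ℝ) / 2)) ^ 2 = H₁⁻¹ := by
    rw [← Real.rpow_natCast, ← Real.rpow_mul hH₁.le]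
    norm_num [Real.rpow_neg_one]
  have h₂ : (H₂ ^ ((1:ℝ) / 4)) ^ 2 = √H₂ := by
    rw [← Real.rpow_natCast, ← Real.rpow_mul hH₂.le, Real.sqrt_eq_rpow]
    norm_num
  have hsqrt2 : √2 ≤ 2 := Real.sqrt_le_iff.2 ⟨by norm_num, by norm_num⟩
  rw [mul_pow, mul_pow, h₁, h₂, Real.sqrt_mul zero_le_two]
  calc 16 * (√2 * √H₂) / H₁ ≤ 36 * √H₂ / H₁ := by
        gcongr ?_ / _
        nlinarith [Real.sqrt_nonneg H₂]
    _ = 6 ^ 2 * H₁⁻¹ * √H₂ := by ring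

theorem stmt9 (α : ℝ) (hα : α ∈ Icc (1:ℝ) 2) :
    ∃ C > (0:ℝ), ∃ k₀ : ℕ, ∀ H₁ H₂ : ℝ, IsDyadic H₁ → IsDyadic H₂ →
      (2:ℝ) ^ k₀ * H₂ ≤ H₁ →
      ∀ g₁ g₂ : ℝ × ℝ → ℝ, ∀ g : ℝ × ℝ × ℝ → ℝ,
      MemLp g₁ 2 volume → MemLp g₂ 2 volume → MemLp g 2 volume →
      (∀ ζ, 0 ≤ g₁ ζ) → (∀ ζ, 0 ≤ g₂ ζ) → (∀ z, 0 ≤ g z) →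
      support g₁ ⊆ DeltaSet α H₁ → support g₂ ⊆ DeltaSet α H₂ →
      (∫ q : (ℝ × ℝ) × (ℝ × ℝ), g₁ q.1 * g₂ q.2 * g (OmegaRes α q.1 q.2, q.1 + q.2)) ≤
        C * H₁ ^ (-(1:ℝ) / 2) * H₂ ^ ((1:ℝ) / 4)
          * (eLpNorm g₁ 2 volume).toReal * (eLpNorm g₂ 2 volume).toReal
          * (eLpNorm g 2 volume).toReal := by
  have hα₀ : 0 < α := by linarith [hα.1]
  refine ⟨6, by norm_num, 3, fun H₁ H₂ _ ⟨k, hk⟩ hH g₁ g₂ g hg₁ hg₂ hg _ _ _ hs₁ hs₂ => ?_⟩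
  have hH₂ : 1 ≤ H₂ := hk ▸ one_le_pow₀ one_le_two
  have hH' : 8 * H₂ ≤ H₁ := by norm_num at hH; exact hH
  have hH₁ : 0 < H₁ := by linarith
  have hbound : ‖∫ q : (ℝ × ℝ) × (ℝ × ℝ), g₁ q.1 * g₂ q.2 * g (OmegaRes α q.1 q.2, q.1 + q.2)‖ₑ
      ≤ ENNReal.ofReal (6 * H₁ ^ (-(1:ℝ) / 2) * H₂ ^ ((1:ℝ) / 4))
        * eLpNorm g₁ 2 volume * eLpNorm g₂ 2 volume * eLpNorm g 2 volume := by
    refine (enorm_integral_mul_mul_comp_le (measurableSet_deltaSet hα₀.le H₁)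
      (measurableSet_deltaSet hα₀.le H₂)
      ((continuous_omegaRes hα₀.le).prodMk (by fun_prop)).measurable
      (fun G hG => setLIntegral_comp_omegaRes_le hα₀ hH₂ hH' hG) hg₁.1 hg₂.1 hg.1 hs₁ hs₂).trans ?_
    gcongr
    exact sqrt_resonance_constant_le hH₁ (by linarith)
  refine (le_abs_self _).trans ?_
  rw [← Real.norm_eq_abs, ← toReal_enorm]
  refine (ENNReal.toReal_mono (by finiteness [hg₁.2.ne, hg₂.2.ne, hg.2.ne]) hbound).trans_eq ?_
  rw [ENNReal.toReal_mul, ENNReal.toReal_mul, ENNReal.toReal_mul,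
    ENNReal.toReal_ofReal (by positivity)]
end
end

section
/- Let α ∈ [1,2]. There is a constant C = C(α) > 0 such that for all dyadic numbers H₁, H₂, H₃, L₁, L₂, L₃ and all nonnegative functions f₁, f₂ ∈ L²(ℝ³) with f_i supported in D_{H_i,∞,L_i} for i = 1,2, one has ‖1_{D_{H₃,∞,L₃}} (f₁ ∗ f₂)‖_{L²(ℝ³)} ≤ C H_min^{1/(2α)+1/4} L_min^{1/2} ‖f₁‖_{L²} ‖f₂‖_{L²}, where ∗ is convolution on ℝ³, 1_A denotes the indicator function of a set A, H_min = min(H₁,H₂,H₃), and L_min = min(L₁,L₂,L₃). -/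
open MeasureTheory Set Function

noncomputable section

/-
Cauchy–Schwarz in the convolution integral bounds `‖1_K (f₁ ∗ f₂)‖₂²` by `sup |E| · ‖f₁‖₂² ‖f₂‖₂²`,
where `E` runs over the intersections of one of the sets `D₁, D₂, D₃` with a translate or a
reflection of another: the two supports for the pair `(1, 2)`, and `D₃` together with the support
of one factor for the pairs `(1, 3)` and `(2, 3)`. The shear `(τ, ζ) ↦ (τ + ω ζ, ζ)` maps
`D_{H,∞,L}` into `[-L, L] × Δ_H`, so such an intersection has measure at most
`2 min(L, L') · min(|Δ_H|, |Δ_H'|)`, and `|Δ_H| ≤ 4 (2H)^{1/α + 1/2}` because `Δ_H` lies in the box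
`|ξ| ≤ (2H)^{1/α}`, `|μ| ≤ (2H)^{1/2}`. Using the pair that contains both the index of `L_min`
and that of `H_min` gives the bound.
-/

open MeasureTheory.Measure
open scoped ENNReal

theorem min_min_of_pairs {α β : Type*} [LinearOrder α] [LinearOrder β] {p : α → β → Prop}
    {a₁ a₂ a₃ : α} {b₁ b₂ b₃ : β} (h₁₂ : p (min a₁ a₂) (min b₁ b₂))
    (h₁₃ : p (min a₁ a₃) (min b₁ b₃)) (h₂₃ : p (min a₂ a₃) (min b₂ b₃)) :
    p (min a₁ (min a₂ a₃)) (min b₁ (min b₂ b₃)) := by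
  rcases lt_or_ge a₁ a₂ with ha₁₂ | ha₁₂ <;> rcases lt_or_ge a₁ a₃ with ha₁₃ | ha₁₃ <;>
    rcases lt_or_ge a₂ a₃ with ha₂₃ | ha₂₃ <;> rcases lt_or_ge b₁ b₂ with hb₁₂ | hb₁₂ <;>
    rcases lt_or_ge b₁ b₃ with hb₁₃ | hb₁₃ <;> rcases lt_or_ge b₂ b₃ with hb₂₃ | hb₂₃ <;>
    first
    | (exfalso; order)
    | (simp only [min_eq_right, min_eq_left_of_lt, *] at h₁₂ h₁₃ h₂₃ ⊢; assumption)

namespace MeasureTheory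

instance Measure.prod.instIsNegInvariant {G H : Type*} [MeasurableSpace G] [MeasurableSpace H]
    [InvolutiveNeg G] [InvolutiveNeg H] [MeasurableNeg G] [MeasurableNeg H]
    {μ : Measure G} {ν : Measure H} [SFinite μ] [SFinite ν] [μ.IsNegInvariant] [ν.IsNegInvariant] :
    (μ.prod ν).IsNegInvariant :=
  ⟨((measurePreserving_neg μ).prod (measurePreserving_neg ν)).map_eq⟩

theorem measurePreserving_add_comp_snd {G β : Type*} [MeasurableSpace G] [MeasurableSpace β]
    [AddGroup G] [MeasurableAdd₂ G] (μ : Measure G) [μ.IsAddRightInvariant] [SFinite μ]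
    (ν : Measure β) [SFinite ν] {g : β → G} (hg : Measurable g) :
    MeasurePreserving (fun z : G × β => (z.1 + g z.2, z.2)) (μ.prod ν) (μ.prod ν) := by
  have skew : MeasurePreserving (fun p : β × G => (p.1, p.2 + g p.1)) (ν.prod μ) (ν.prod μ) :=
    (MeasurePreserving.id ν).skew_product (by fun_prop)
      (.of_forall fun b => map_add_right_eq_self μ (g b))
  exact (measurePreserving_swap.comp skew).comp measurePreserving_swap

section CauchySchwarz

variable {α : Type*} [MeasurableSpace α] {μ : Measure α}

theorem sq_lintegral_mul_le {f g : α → ℝ≥0∞} (hf : AEMeasurable f μ) (hg : AEMeasurable g μ) :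
    (∫⁻ x, f x * g x ∂μ) ^ 2 ≤ (∫⁻ x, f x ^ 2 ∂μ) * ∫⁻ x, g x ^ 2 ∂μ := by
  have h := pow_le_pow_left₀ zero_le
    (ENNReal.lintegral_mul_le_Lp_mul_Lq μ Real.HolderConjugate.two_two hf hg) 2
  simp only [Pi.mul_apply, ENNReal.rpow_two] at h
  rwa [mul_pow, ← ENNReal.rpow_mul_natCast, ← ENNReal.rpow_mul_natCast,
    show (1 / 2 : ℝ) * (2 : ℕ) = 1 by norm_num, ENNReal.rpow_one, ENNReal.rpow_one] at h

theorem sq_lintegral_le_measure_mul_lintegral_sq {f : α → ℝ≥0∞} (hf : AEMeasurable f μ)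
    {E : Set α} (hfE : support f ⊆ E) :
    (∫⁻ x, f x ∂μ) ^ 2 ≤ μ E * ∫⁻ x, f x ^ 2 ∂μ := by
  calc (∫⁻ x, f x ∂μ) ^ 2 = (∫⁻ x in E, 1 * f x ∂μ) ^ 2 := by
        simp only [one_mul, setLIntegral_eq_of_support_subset hfE]
    _ ≤ (∫⁻ x in E, 1 ^ 2 ∂μ) * ∫⁻ x in E, f x ^ 2 ∂μ :=
        sq_lintegral_mul_le aemeasurable_const hf.restrict
    _ ≤ μ E * ∫⁻ x, f x ^ 2 ∂μ := by
        rw [one_pow, setLIntegral_one]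
        exact mul_le_mul' le_rfl (setLIntegral_le_lintegral _ _)

theorem sq_eLpNorm_two {E : Type*} [NormedAddCommGroup E] (f : α → E) :
    eLpNorm f 2 μ ^ 2 = ∫⁻ x, ‖f x‖ₑ ^ 2 ∂μ := by
  simpa [ENNReal.rpow_two] using eLpNorm_nnreal_pow_eq_lintegral (f := f) (μ := μ) two_ne_zero

end CauchySchwarz

theorem AEMeasurable.exists_measurable_support_subset_ae_eq {α : Type*} [MeasurableSpace α]
    {μ : Measure α} {f : α → ℝ≥0∞} (hf : AEMeasurable f μ) {S : Set α} (hS : MeasurableSet S)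
    (hfS : support f ⊆ S) : ∃ φ : α → ℝ≥0∞, Measurable φ ∧ support φ ⊆ S ∧ f =ᵐ[μ] φ := by
  refine ⟨S.indicator (hf.mk f), hf.measurable_mk.indicator hS, support_indicator_subset, ?_⟩
  filter_upwards [hf.ae_eq_mk] with x hx
  by_cases hxS : x ∈ S
  · rw [indicator_of_mem hxS, hx]
  · rw [indicator_of_notMem hxS, notMem_support.mp (fun h => hxS (hfS h))]

section LConvolution

variable {G : Type*} [MeasurableSpace G] [AddCommGroup G] {μ : Measure G}

theorem lconvolution_apply_sub (f g : G → ℝ≥0∞) (x : G) :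
    (f ⋆ₗ[μ] g) x = ∫⁻ y, f y * g (x - y) ∂μ := by
  simp only [lconvolution_def, neg_add_eq_sub]

theorem enorm_integral_mul_sub_le_lconvolution {f g : G → ℝ} (x : G) :
    ‖∫ y, f y * g (x - y) ∂μ‖ₑ ≤ ((‖f ·‖ₑ) ⋆ₗ[μ] (‖g ·‖ₑ)) x := by
  simpa only [lconvolution_apply_sub, enorm_mul] using
    enorm_integral_le_lintegral_enorm (fun y => f y * g (x - y))

variable [MeasurableAdd₂ G] [MeasurableNeg G]

theorem lconvolution_congr_ae [μ.IsAddLeftInvariant] [μ.IsNegInvariant] {f f' g g' : G → ℝ≥0∞}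
    (hf : f =ᵐ[μ] f') (hg : g =ᵐ[μ] g') : f ⋆ₗ[μ] g = f' ⋆ₗ[μ] g' := by
  ext x
  simp only [lconvolution_apply_sub]
  refine lintegral_congr_ae ?_
  filter_upwards [hf, (measurePreserving_sub_left μ x).quasiMeasurePreserving.ae_eq hg]
    with y hfy hgy
  simp only [comp_apply] at hgy
  rw [hfy, hgy]

theorem setLIntegral_lconvolution [SFinite μ] {f g : G → ℝ≥0∞} (hf : Measurable f)
    (hg : Measurable g) (K : Set G) :
    ∫⁻ x in K, (f ⋆ₗ[μ] g) x ∂μ = ∫⁻ y, f y * ∫⁻ x in K, g (x - y) ∂μ ∂μ := by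
  simp only [lconvolution_apply_sub]
  rw [lintegral_lintegral_swap (by fun_prop)]
  refine lintegral_congr fun y => ?_
  exact lintegral_const_mul _ (by fun_prop)

theorem lintegral_lconvolution [SFinite μ] [μ.IsAddRightInvariant] {f g : G → ℝ≥0∞}
    (hf : Measurable f) (hg : Measurable g) :
    ∫⁻ x, (f ⋆ₗ[μ] g) x ∂μ = (∫⁻ y, f y ∂μ) * ∫⁻ y, g y ∂μ := by
  rw [← setLIntegral_univ, setLIntegral_lconvolution hf hg, ← lintegral_mul_const _ hf]
  simp only [Measure.restrict_univ, lintegral_sub_right_eq_self]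

theorem lintegral_sq_lconvolution_le [SFinite μ] [μ.IsAddRightInvariant] {φ ψ : G → ℝ≥0∞}
    (hφ : Measurable φ) (hψ : Measurable ψ) {S T : Set G} (hφS : support φ ⊆ S)
    (hψT : support ψ ⊆ T) {M : ℝ≥0∞} (hM : ∀ x, μ (S ∩ (x - ·) ⁻¹' T) ≤ M) :
    ∫⁻ x, (φ ⋆ₗ[μ] ψ) x ^ 2 ∂μ ≤ M * ((∫⁻ y, φ y ^ 2 ∂μ) * ∫⁻ y, ψ y ^ 2 ∂μ) := by
  have pointwise :
      ∀ x, (φ ⋆ₗ[μ] ψ) x ^ 2 ≤ M * ((fun y => φ y ^ 2) ⋆ₗ[μ] (fun y => ψ y ^ 2)) x := by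
    intro x
    have hsupp : support (fun y => φ y * ψ (x - y)) ⊆ S ∩ (x - ·) ⁻¹' T := fun y hy =>
      ⟨hφS (left_ne_zero_of_mul hy), hψT (right_ne_zero_of_mul hy)⟩
    calc (φ ⋆ₗ[μ] ψ) x ^ 2
        ≤ μ (S ∩ (x - ·) ⁻¹' T) * ∫⁻ y, (φ y * ψ (x - y)) ^ 2 ∂μ := by
          rw [lconvolution_apply_sub]
          exact sq_lintegral_le_measure_mul_lintegral_sq (by fun_prop) hsupp
      _ ≤ M * ((fun y => φ y ^ 2) ⋆ₗ[μ] (fun y => ψ y ^ 2)) x := by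
          simp only [lconvolution_apply_sub, mul_pow]
          exact mul_le_mul' (hM x) le_rfl
  calc ∫⁻ x, (φ ⋆ₗ[μ] ψ) x ^ 2 ∂μ ≤ ∫⁻ x, M * ((fun y => φ y ^ 2) ⋆ₗ[μ] (fun y => ψ y ^ 2)) x ∂μ :=
        lintegral_mono pointwise
    _ = M * ((∫⁻ y, φ y ^ 2 ∂μ) * ∫⁻ y, ψ y ^ 2 ∂μ) := by
        rw [lintegral_const_mul _ (measurable_lconvolution μ (by fun_prop) (by fun_prop)),
          lintegral_lconvolution (by fun_prop) (by fun_prop)]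

theorem sq_lconvolution_le_lconvolution_indicator_mul [μ.IsAddLeftInvariant] [μ.IsNegInvariant]
    {φ ψ : G → ℝ≥0∞} (hφ : Measurable φ) (hψ : Measurable ψ) {T : Set G} (hT : MeasurableSet T)
    (hψT : support ψ ⊆ T) (x : G) :
    (φ ⋆ₗ[μ] ψ) x ^ 2 ≤ ((fun y => φ y ^ 2) ⋆ₗ[μ] T.indicator 1) x * ∫⁻ y, ψ y ^ 2 ∂μ := by
  have hψT' : ∀ y, φ y * ψ (x - y) = φ y * T.indicator 1 (x - y) * ψ (x - y) := by
    intro y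
    by_cases hy : x - y ∈ T
    · simp [indicator_of_mem hy]
    · simp [indicator_of_notMem hy, notMem_support.mp (fun h => hy (hψT h))]
  calc (φ ⋆ₗ[μ] ψ) x ^ 2 = (∫⁻ y, φ y * T.indicator 1 (x - y) * ψ (x - y) ∂μ) ^ 2 := by
        simp only [lconvolution_apply_sub, ← hψT']
    _ ≤ (∫⁻ y, (φ y * T.indicator 1 (x - y)) ^ 2 ∂μ) * ∫⁻ y, ψ (x - y) ^ 2 ∂μ :=
        sq_lintegral_mul_le (by fun_prop) (by fun_prop)
    _ = ((fun y => φ y ^ 2) ⋆ₗ[μ] T.indicator 1) x * ∫⁻ y, ψ y ^ 2 ∂μ := by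
        rw [lconvolution_apply_sub, lintegral_sub_left_eq_self (fun y => ψ y ^ 2)]
        congr 1
        refine lintegral_congr fun y => ?_
        by_cases hy : x - y ∈ T <;> simp [hy]

theorem setLIntegral_sq_lconvolution_le [SFinite μ] [μ.IsAddLeftInvariant] [μ.IsNegInvariant]
    {φ ψ : G → ℝ≥0∞} (hφ : Measurable φ) (hψ : Measurable ψ) {T : Set G} (hT : MeasurableSet T)
    (hψT : support ψ ⊆ T) {K : Set G} {M : ℝ≥0∞} (hM : ∀ y, μ (K ∩ (· - y) ⁻¹' T) ≤ M) :
    ∫⁻ x in K, (φ ⋆ₗ[μ] ψ) x ^ 2 ∂μ ≤ M * ((∫⁻ y, φ y ^ 2 ∂μ) * ∫⁻ y, ψ y ^ 2 ∂μ) := by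
  have hχ : Measurable (T.indicator (1 : G → ℝ≥0∞)) := measurable_one.indicator hT
  have hK : ∀ y, ∫⁻ x in K, T.indicator 1 (x - y) ∂μ ≤ M := fun y => by
    calc ∫⁻ x in K, T.indicator 1 (x - y) ∂μ = ∫⁻ x in K, ((· - y) ⁻¹' T).indicator 1 x ∂μ := rfl
      _ = μ (K ∩ (· - y) ⁻¹' T) := by
          rw [lintegral_indicator_one (measurable_sub_const y hT), Measure.restrict_apply
            (measurable_sub_const y hT), inter_comm]
      _ ≤ M := hM y
  calc ∫⁻ x in K, (φ ⋆ₗ[μ] ψ) x ^ 2 ∂μ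
      ≤ ∫⁻ x in K, ((fun y => φ y ^ 2) ⋆ₗ[μ] T.indicator 1) x * ∫⁻ y, ψ y ^ 2 ∂μ ∂μ :=
        lintegral_mono (sq_lconvolution_le_lconvolution_indicator_mul hφ hψ hT hψT)
    _ = (∫⁻ y, φ y ^ 2 * ∫⁻ x in K, T.indicator 1 (x - y) ∂μ ∂μ) * ∫⁻ y, ψ y ^ 2 ∂μ := by
        rw [lintegral_mul_const _ (measurable_lconvolution μ (by fun_prop) hχ),
          setLIntegral_lconvolution (by fun_prop) hχ]
    _ ≤ (∫⁻ y, φ y ^ 2 * M ∂μ) * ∫⁻ y, ψ y ^ 2 ∂μ := by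
        gcongr with y
        exact hK y
    _ = M * ((∫⁻ y, φ y ^ 2 ∂μ) * ∫⁻ y, ψ y ^ 2 ∂μ) := by
        rw [lintegral_mul_const _ (by fun_prop)]
        ring

theorem sq_eLpNorm_indicator_convolution_le [SFinite μ] [μ.IsAddLeftInvariant]
    [μ.IsNegInvariant] {f g : G → ℝ} (hf : AEMeasurable f μ) (hg : AEMeasurable g μ)
    {S T K : Set G} (hS : MeasurableSet S) (hT : MeasurableSet T) (hK : MeasurableSet K)
    (hfS : support f ⊆ S) (hgT : support g ⊆ T) {M : ℝ≥0∞}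
    (hM : ∀ φ ψ : G → ℝ≥0∞, Measurable φ → Measurable ψ → support φ ⊆ S → support ψ ⊆ T →
      ∫⁻ x in K, (φ ⋆ₗ[μ] ψ) x ^ 2 ∂μ ≤ M * ((∫⁻ y, φ y ^ 2 ∂μ) * ∫⁻ y, ψ y ^ 2 ∂μ)) :
    eLpNorm (K.indicator fun x => ∫ y, f y * g (x - y) ∂μ) 2 μ ^ 2 ≤
      M * (eLpNorm f 2 μ ^ 2 * eLpNorm g 2 μ ^ 2) := by
  obtain ⟨φ, hφ, hφS, hfφ⟩ := hf.enorm.exists_measurable_support_subset_ae_eq hS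
    (by simpa only [support, enorm_ne_zero] using hfS)
  obtain ⟨ψ, hψ, hψT, hgψ⟩ := hg.enorm.exists_measurable_support_subset_ae_eq hT
    (by simpa only [support, enorm_ne_zero] using hgT)
  calc eLpNorm (K.indicator fun x => ∫ y, f y * g (x - y) ∂μ) 2 μ ^ 2
      = ∫⁻ x in K, ‖∫ y, f y * g (x - y) ∂μ‖ₑ ^ 2 ∂μ := by
        rw [eLpNorm_indicator_eq_eLpNorm_restrict hK, sq_eLpNorm_two]
    _ ≤ ∫⁻ x in K, (φ ⋆ₗ[μ] ψ) x ^ 2 ∂μ := by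
        rw [← lconvolution_congr_ae hfφ hgψ]
        gcongr with x
        exact enorm_integral_mul_sub_le_lconvolution x
    _ ≤ M * ((∫⁻ y, φ y ^ 2 ∂μ) * ∫⁻ y, ψ y ^ 2 ∂μ) := hM φ ψ hφ hψ hφS hψT
    _ = M * (eLpNorm f 2 μ ^ 2 * eLpNorm g 2 μ ^ 2) := by
        have hf₂ : ∫⁻ y, ‖f y‖ₑ ^ 2 ∂μ = ∫⁻ y, φ y ^ 2 ∂μ :=
          lintegral_congr_ae (hfφ.fun_comp (· ^ 2))
        have hg₂ : ∫⁻ y, ‖g y‖ₑ ^ 2 ∂μ = ∫⁻ y, ψ y ^ 2 ∂μ :=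
          lintegral_congr_ae (hgψ.fun_comp (· ^ 2))
        rw [sq_eLpNorm_two, sq_eLpNorm_two, hf₂, hg₂]

end LConvolution

end MeasureTheory

instance : (volume : Measure (ℝ × ℝ)).IsAddLeftInvariant :=
  inferInstanceAs ((volume : Measure ℝ).prod volume).IsAddLeftInvariant

instance : (volume : Measure (ℝ × ℝ)).IsAddRightInvariant :=
  inferInstanceAs ((volume : Measure ℝ).prod volume).IsAddRightInvariant

instance : (volume : Measure (ℝ × ℝ)).IsNegInvariant :=
  inferInstanceAs ((volume : Measure ℝ).prod volume).IsNegInvariant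

instance : (volume : Measure (ℝ × ℝ × ℝ)).IsAddLeftInvariant :=
  inferInstanceAs ((volume : Measure ℝ).prod (volume : Measure (ℝ × ℝ))).IsAddLeftInvariant

instance : (volume : Measure (ℝ × ℝ × ℝ)).IsAddRightInvariant :=
  inferInstanceAs ((volume : Measure ℝ).prod (volume : Measure (ℝ × ℝ))).IsAddRightInvariant

instance : (volume : Measure (ℝ × ℝ × ℝ)).IsNegInvariant :=
  inferInstanceAs ((volume : Measure ℝ).prod (volume : Measure (ℝ × ℝ))).IsNegInvariant

theorem IsDyadic.pos {x : ℝ} (hx : IsDyadic x) : 0 < x := by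
  obtain ⟨k, rfl⟩ := hx
  positivity

section BOZK

variable {α : ℝ}

theorem measurable_hBOZK : Measurable (hBOZK α) := by
  unfold hBOZK
  fun_prop

theorem measurable_omegaBOZK : Measurable (omegaBOZK α) := by
  unfold omegaBOZK
  fun_prop

theorem measurableSet_ISet (N : ℝ) : MeasurableSet (ISet N) := by
  unfold ISet
  split_ifs
  · exact measurableSet_Icc
  · exact (measurableSet_le measurable_const measurable_abs).inter
      (measurableSet_le measurable_abs measurable_const)

theorem measurableSet_DeltaSet (H : ℝ) : MeasurableSet (DeltaSet α H) :=
  measurable_hBOZK (measurableSet_ISet H)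

theorem measurableSet_DSet (H L : ℝ) : MeasurableSet (DSet α H L) :=
  (measurable_snd (measurableSet_DeltaSet H)).inter
    (measurableSet_le (measurable_fst.add (measurable_omegaBOZK.comp measurable_snd)).abs
      measurable_const)

theorem hBOZK_le_of_mem_DeltaSet {H : ℝ} {ζ : ℝ × ℝ} (hζ : ζ ∈ DeltaSet α H) :
    hBOZK α ζ ≤ 2 * H := by
  change hBOZK α ζ ∈ ISet H at hζ
  unfold ISet at hζ
  split_ifs at hζ with hH
  · simpa [hH] using hζ.2
  · exact (le_abs_self _).trans hζ.2

theorem DeltaSet_subset_Icc_prod_Icc (hα : 0 < α) (H : ℝ) :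
    DeltaSet α H ⊆ Icc (-(2 * H) ^ (1 / α)) ((2 * H) ^ (1 / α)) ×ˢ
      Icc (-(2 * H) ^ (1 / 2 : ℝ)) ((2 * H) ^ (1 / 2 : ℝ)) := by
  intro ζ hζ
  have hh := hBOZK_le_of_mem_DeltaSet hζ
  have hξ : 0 ≤ |ζ.1| ^ α := by positivity
  have hμ : 0 ≤ ζ.2 ^ 2 := sq_nonneg _
  have hξ_le : |ζ.1| ^ α ≤ 2 * H := by unfold hBOZK at hh; nlinarith
  have hμ_le : ζ.2 ^ 2 ≤ 2 * H := by unfold hBOZK at hh; nlinarith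
  refine ⟨abs_le.mp ?_, abs_le.mp ?_⟩
  · rw [one_div, Real.le_rpow_inv_iff_of_pos (abs_nonneg _) (hξ.trans hξ_le) hα]
    exact hξ_le
  · rw [← Real.sqrt_eq_rpow]
    exact Real.abs_le_sqrt hμ_le

theorem volume_DeltaSet_le (hα : 0 < α) {H : ℝ} (hH : 0 ≤ H) :
    volume (DeltaSet α H) ≤ ENNReal.ofReal (4 * (2 * H) ^ (1 / α + 1 / 2)) := by
  calc volume (DeltaSet α H)
      ≤ volume (Icc (-(2 * H) ^ (1 / α)) ((2 * H) ^ (1 / α)) ×ˢ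
          Icc (-(2 * H) ^ (1 / 2 : ℝ)) ((2 * H) ^ (1 / 2 : ℝ))) :=
        measure_mono (DeltaSet_subset_Icc_prod_Icc hα H)
    _ = ENNReal.ofReal (4 * (2 * H) ^ (1 / α + 1 / 2)) := by
        rw [Measure.volume_eq_prod, Measure.prod_prod, Real.volume_Icc, Real.volume_Icc,
          sub_neg_eq_add, sub_neg_eq_add, ← ENNReal.ofReal_mul (by positivity),
          Real.rpow_add' (by positivity) (by positivity)]
        ring_nf

theorem volume_DSet_inter_snd_preimage_le (H L : ℝ) {P : Set (ℝ × ℝ)} (hP : MeasurableSet P) :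
    volume (DSet α H L ∩ Prod.snd ⁻¹' P) ≤
      ENNReal.ofReal (2 * L) * volume (DeltaSet α H ∩ P) := by
  have shear := measurePreserving_add_comp_snd (volume : Measure ℝ) (volume : Measure (ℝ × ℝ))
    (measurable_omegaBOZK (α := α))
  calc volume (DSet α H L ∩ Prod.snd ⁻¹' P)
      ≤ volume ((fun z : ℝ × ℝ × ℝ => (z.1 + omegaBOZK α z.2, z.2)) ⁻¹'
          (Icc (-L) L ×ˢ (DeltaSet α H ∩ P))) :=
        measure_mono fun z ⟨⟨hΔ, hτ⟩, hP⟩ => ⟨abs_le.mp hτ, hΔ, hP⟩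
    _ = volume (Icc (-L) L ×ˢ (DeltaSet α H ∩ P)) :=
        shear.measure_preimage
          (measurableSet_Icc.prod ((measurableSet_DeltaSet H).inter hP)).nullMeasurableSet
    _ = ENNReal.ofReal (2 * L) * volume (DeltaSet α H ∩ P) := by
        rw [Measure.volume_eq_prod, Measure.prod_prod, Real.volume_Icc]
        ring_nf

end BOZK

section Pairs

variable {α : ℝ} {T : (ℝ × ℝ × ℝ) ≃ᵐ (ℝ × ℝ × ℝ)} {A : (ℝ × ℝ) ≃ᵐ (ℝ × ℝ)}

theorem volume_DSet_inter_preimage_le_left (hA : MeasurePreserving A volume volume)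
    (hTA : ∀ z, (T z).2 = A z.2) (H H' L L' : ℝ) :
    volume (DSet α H L ∩ T ⁻¹' DSet α H' L') ≤
      ENNReal.ofReal (2 * L) * min (volume (DeltaSet α H)) (volume (DeltaSet α H')) := by
  calc volume (DSet α H L ∩ T ⁻¹' DSet α H' L')
      ≤ volume (DSet α H L ∩ Prod.snd ⁻¹' (A ⁻¹' DeltaSet α H')) :=
        measure_mono fun z ⟨hz, hTz⟩ => ⟨hz, by simpa only [mem_preimage, ← hTA] using hTz.1⟩
    _ ≤ ENNReal.ofReal (2 * L) * volume (DeltaSet α H ∩ A ⁻¹' DeltaSet α H') :=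
        volume_DSet_inter_snd_preimage_le H L (A.measurable (measurableSet_DeltaSet H'))
    _ ≤ ENNReal.ofReal (2 * L) * min (volume (DeltaSet α H)) (volume (DeltaSet α H')) := by
        gcongr
        refine le_min (measure_mono inter_subset_left) ?_
        exact (measure_mono inter_subset_right).trans_eq (hA.measure_preimage_equiv _)

theorem min_volume_DeltaSet_le (hα : 0 < α) {H H' : ℝ} (hH : 0 ≤ H) (hH' : 0 ≤ H') :
    min (volume (DeltaSet α H)) (volume (DeltaSet α H')) ≤
      ENNReal.ofReal (4 * (2 * min H H') ^ (1 / α + 1 / 2)) := by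
  rcases le_total H H' with h | h
  · rw [min_eq_left h]
    exact (min_le_left _ _).trans (volume_DeltaSet_le hα hH)
  · rw [min_eq_right h]
    exact (min_le_right _ _).trans (volume_DeltaSet_le hα hH')

theorem volume_DSet_inter_preimage_le (hα : 0 < α) (hT : MeasurePreserving T volume volume)
    (hA : MeasurePreserving A volume volume) (hTA : ∀ z, (T z).2 = A z.2) {H H' : ℝ}
    (hH : 0 ≤ H) (hH' : 0 ≤ H') (L L' : ℝ) :
    volume (DSet α H L ∩ T ⁻¹' DSet α H' L') ≤
      ENNReal.ofReal (2 * min L L') * ENNReal.ofReal (4 * (2 * min H H') ^ (1 / α + 1 / 2)) := by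
  refine le_trans ?_ (mul_le_mul' le_rfl (min_volume_DeltaSet_le hα hH hH'))
  rcases le_total L L' with hL | hL
  · rw [min_eq_left hL]
    exact volume_DSet_inter_preimage_le_left hA hTA H H' L L'
  · have hTA' : ∀ z, (T.symm z).2 = A.symm z.2 := fun z => by
      rw [A.eq_symm_apply, ← hTA, T.apply_symm_apply]
    have hswap : DSet α H L ∩ T ⁻¹' DSet α H' L' =
        T ⁻¹' (DSet α H' L' ∩ T.symm ⁻¹' DSet α H L) := by
      ext z
      simp [and_comm]
    rw [min_eq_right hL, hswap, hT.measure_preimage_equiv, min_comm (volume (DeltaSet α H))]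
    exact volume_DSet_inter_preimage_le_left hA.symm hTA' H' H L' L

theorem setLIntegral_DSet_sq_lconvolution_le (hα : 0 < α) {H₁ H₂ H₃ : ℝ} (hH₁ : 0 ≤ H₁)
    (hH₂ : 0 ≤ H₂) (hH₃ : 0 ≤ H₃) {L₁ L₂ L₃ : ℝ} {φ₁ φ₂ : ℝ × ℝ × ℝ → ℝ≥0∞}
    (hφ₁ : Measurable φ₁) (hφ₂ : Measurable φ₂) (hφ₁D : support φ₁ ⊆ DSet α H₁ L₁)
    (hφ₂D : support φ₂ ⊆ DSet α H₂ L₂) :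
    ∫⁻ z in DSet α H₃ L₃, (φ₁ ⋆ₗ φ₂) z ^ 2 ≤
      ENNReal.ofReal (2 * min L₁ (min L₂ L₃)) *
        ENNReal.ofReal (4 * (2 * min H₁ (min H₂ H₃)) ^ (1 / α + 1 / 2)) *
        ((∫⁻ z, φ₁ z ^ 2) * ∫⁻ z, φ₂ z ^ 2) := by
  refine min_min_of_pairs (p := fun L H => _ ≤ ENNReal.ofReal (2 * L) *
    ENNReal.ofReal (4 * (2 * H) ^ (1 / α + 1 / 2)) * _) ?_ ?_ ?_
  · refine (setLIntegral_le_lintegral _ _).trans (lintegral_sq_lconvolution_le hφ₁ hφ₂ hφ₁D hφ₂D ?_)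
    exact fun z => volume_DSet_inter_preimage_le hα (T := MeasurableEquiv.subLeft z)
      (A := MeasurableEquiv.subLeft z.2) (measurePreserving_sub_left volume z)
      (measurePreserving_sub_left volume z.2) (fun _ => rfl) hH₁ hH₂ L₁ L₂
  · rw [lconvolution_comm, mul_comm (∫⁻ z, φ₁ z ^ 2), min_comm L₁, min_comm H₁]
    refine setLIntegral_sq_lconvolution_le hφ₂ hφ₁ (measurableSet_DSet H₁ L₁) hφ₁D fun w => ?_
    exact volume_DSet_inter_preimage_le hα (T := MeasurableEquiv.subRight w)
      (A := MeasurableEquiv.subRight w.2) (measurePreserving_sub_right volume w)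
      (measurePreserving_sub_right volume w.2) (fun _ => rfl) hH₃ hH₁ L₃ L₁
  · rw [min_comm L₂, min_comm H₂]
    refine setLIntegral_sq_lconvolution_le hφ₁ hφ₂ (measurableSet_DSet H₂ L₂) hφ₂D fun w => ?_
    exact volume_DSet_inter_preimage_le hα (T := MeasurableEquiv.subRight w)
      (A := MeasurableEquiv.subRight w.2) (measurePreserving_sub_right volume w)
      (measurePreserving_sub_right volume w.2) (fun _ => rfl) hH₃ hH₂ L₃ L₂

end Pairs

theorem ofReal_mul_ofReal_rpow_eq_sq {α : ℝ} (hα : 0 < α) {H L : ℝ} (hH : 0 ≤ H) (hL : 0 ≤ L) :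
    ENNReal.ofReal (2 * L) * ENNReal.ofReal (4 * (2 * H) ^ (1 / α + 1 / 2)) =
      ENNReal.ofReal (√(8 * 2 ^ (1 / α + 1 / 2)) * H ^ (1 / (2 * α) + 1 / 4) *
        L ^ (1 / 2 : ℝ)) ^ 2 := by
  rw [← ENNReal.ofReal_pow (by positivity), ← ENNReal.ofReal_mul (by positivity)]
  congr 1
  rw [mul_pow, mul_pow, Real.sq_sqrt (by positivity), ← Real.rpow_mul_natCast hH,
    ← Real.rpow_mul_natCast hL, Real.mul_rpow zero_le_two hH]
  rw [show (1 / (2 * α) + 1 / 4) * ((2 : ℕ) : ℝ) = 1 / α + 1 / 2 by field_simp; ring,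
    show (1 / 2 : ℝ) * ((2 : ℕ) : ℝ) = 1 by norm_num, Real.rpow_one]
  ring

theorem le_ofReal_mul_toReal_of_sq_le {a N₁ N₂ : ℝ≥0∞} {c : ℝ} (hN₁ : N₁ ≠ ∞) (hN₂ : N₂ ≠ ∞)
    (h : a ^ 2 ≤ ENNReal.ofReal c ^ 2 * (N₁ ^ 2 * N₂ ^ 2)) :
    a ≤ ENNReal.ofReal (c * N₁.toReal * N₂.toReal) := by
  rw [← mul_pow, ← mul_pow, ENNReal.pow_le_pow_left_iff two_ne_zero] at h
  rwa [ENNReal.ofReal_mul' ENNReal.toReal_nonneg, ENNReal.ofReal_mul' ENNReal.toReal_nonneg,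
    ENNReal.ofReal_toReal hN₁, ENNReal.ofReal_toReal hN₂, mul_assoc]

theorem stmt10 (α : ℝ) (hα : α ∈ Icc (1:ℝ) 2) :
    ∃ C > (0:ℝ), ∀ H₁ H₂ H₃ L₁ L₂ L₃ : ℝ,
      IsDyadic H₁ → IsDyadic H₂ → IsDyadic H₃ →
      IsDyadic L₁ → IsDyadic L₂ → IsDyadic L₃ →
      ∀ f₁ f₂ : ℝ × ℝ × ℝ → ℝ,
      MemLp f₁ 2 volume → MemLp f₂ 2 volume →
      (∀ z, 0 ≤ f₁ z) → (∀ z, 0 ≤ f₂ z) →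
      support f₁ ⊆ DSet α H₁ L₁ → support f₂ ⊆ DSet α H₂ L₂ →
      eLpNorm ((DSet α H₃ L₃).indicator
          (fun z : ℝ × ℝ × ℝ => ∫ w : ℝ × ℝ × ℝ, f₁ w * f₂ (z - w))) 2 volume ≤
        ENNReal.ofReal (C * (min H₁ (min H₂ H₃)) ^ (1 / (2 * α) + 1 / 4)
          * (min L₁ (min L₂ L₃)) ^ ((1:ℝ) / 2)
          * (eLpNorm f₁ 2 volume).toReal * (eLpNorm f₂ 2 volume).toReal) := by
  have hα₀ : 0 < α := zero_lt_one.trans_le hα.1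
  refine ⟨√(8 * 2 ^ (1 / α + 1 / 2)), by positivity, ?_⟩
  intro H₁ H₂ H₃ L₁ L₂ L₃ hH₁ hH₂ hH₃ hL₁ hL₂ hL₃ f₁ f₂ hf₁ hf₂ _ _ hf₁D hf₂D
  have key := sq_eLpNorm_indicator_convolution_le hf₁.aemeasurable hf₂.aemeasurable
    (measurableSet_DSet H₁ L₁) (measurableSet_DSet H₂ L₂) (measurableSet_DSet H₃ L₃) hf₁D hf₂D
    fun φ₁ φ₂ hφ₁ hφ₂ hφ₁D hφ₂D => setLIntegral_DSet_sq_lconvolution_le hα₀ hH₁.pos.le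
      hH₂.pos.le hH₃.pos.le hφ₁ hφ₂ hφ₁D hφ₂D
  rw [ofReal_mul_ofReal_rpow_eq_sq hα₀ (le_min hH₁.pos.le (le_min hH₂.pos.le hH₃.pos.le))
    (le_min hL₁.pos.le (le_min hL₂.pos.le hL₃.pos.le))] at key
  exact le_ofReal_mul_toReal_of_sq_le hf₁.eLpNorm_ne_top hf₂.eLpNorm_ne_top key
end
end

section
/- Let α ∈ [1,2]. There is a constant C = C(α) > 0 such that the following holds. Let η : ℝ²×ℝ² → ℂ be a bounded measurable function and define, for f, g ∈ L²(ℝ²), the pseudo-product Π_η(f,g) via its Fourier transform: F(Π_η(f,g))(ζ) = ∫_{ℝ²} η(ζ₁, ζ−ζ₁) f̂(ζ₁) ĝ(ζ−ζ₁) dζ₁. Then for all dyadic numbers H₁, H₂, H₃ and all f₁, f₂, f₃ ∈ L²(ℝ²) with the Fourier transform of f_i supported in Δ_{H_i} for i = 1,2,3, one has |∫_{ℝ²} Π_η(f₁,f₂) f₃| ≤ C ‖η‖_{L^∞} H_min^{1/(2α)+1/4} ‖f₁‖_{L²} ‖f₂‖_{L²} ‖f₃‖_{L²}, where H_min = min(H₁,H₂,H₃).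 -/
/-!
On the Fourier side the form is `∫∫ η(x,y) F₁(x) F₂(y) F₃(-(x+y))`. Integrating first in `x`,
Cauchy–Schwarz and translation invariance bound the inner integral by `‖F₁‖₂ ‖F₃‖₂`, and what
remains is `∫ |F₂| ≤ |supp F₂|^{1/2} ‖F₂‖₂`. The form is symmetric in the three functions (through
`(x,y) ↦ (y,x)` and `(x,y) ↦ (x,-(x+y))`), so the smallest support can play the role of `supp F₂`.
Finally `Δ_H` lies in the rectangle `|ξ| ≤ (2H)^{1/α}`, `|μ| ≤ (2H)^{1/2}` of area
`≲ H^{1/α+1/2}`, which gives the factor `H_min^{1/(2α)+1/4}`.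
-/

open MeasureTheory Set Function

noncomputable section

open scoped ENNReal

lemma eLpNorm_two_eq_lintegral_sq {X : Type*} [MeasurableSpace X] {μ : Measure X}
    (e : X → ℝ≥0∞) : eLpNorm e 2 μ = (∫⁻ x, e x ^ (2:ℝ) ∂μ) ^ (1/2:ℝ) := by
  simp [eLpNorm_eq_lintegral_rpow_enorm_toReal]

lemma lintegral_le_eLpNorm_two_mul_measure_rpow {X : Type*} [MeasurableSpace X] {μ : Measure X}
    {e : X → ℝ≥0∞} (he : AEMeasurable e μ) {S : Set X} (hS : support e ⊆ S) :
    ∫⁻ x, e x ∂μ ≤ eLpNorm e 2 μ * μ S ^ (1/2:ℝ) := by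
  calc ∫⁻ x, e x ∂μ = eLpNorm e 1 (μ.restrict S) := by
        simp only [eLpNorm_one_eq_lintegral_enorm, enorm_eq_self,
          setLIntegral_eq_of_support_subset hS]
    _ ≤ eLpNorm e 2 (μ.restrict S) * μ.restrict S univ ^ (1/(1:ℝ≥0∞).toReal - 1/(2:ℝ≥0∞).toReal) :=
        eLpNorm_le_eLpNorm_mul_rpow_measure_univ one_le_two he.restrict.aestronglyMeasurable
    _ ≤ eLpNorm e 2 μ * μ S ^ (1/2:ℝ) := by
        rw [Measure.restrict_apply_univ,
          show 1 / (1:ℝ≥0∞).toReal - 1 / (2:ℝ≥0∞).toReal = 1 / 2 by norm_num]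
        exact mul_le_mul_left (eLpNorm_mono_measure _ Measure.restrict_le_self) _

section Trilinear

variable {G : Type*} [MeasurableSpace G] [AddCommGroup G]

def trilinearLIntegral (μ : Measure G) (e₁ e₂ e₃ : G → ℝ≥0∞) : ℝ≥0∞ :=
  ∫⁻ q, e₁ q.1 * e₂ q.2 * e₃ (-(q.1 + q.2)) ∂μ.prod μ

lemma trilinearLIntegral_comm_left (μ : Measure G) [SFinite μ]
    (e₁ e₂ e₃ : G → ℝ≥0∞) :
    trilinearLIntegral μ e₁ e₂ e₃ = trilinearLIntegral μ e₂ e₁ e₃ := by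
  rw [trilinearLIntegral, trilinearLIntegral, ← lintegral_prod_swap]
  refine lintegral_congr fun q => ?_
  rw [Prod.fst_swap, Prod.snd_swap, add_comm, mul_comm (e₂ _)]

variable [MeasurableAdd₂ G] [MeasurableNeg G] (μ : Measure G) [μ.IsAddLeftInvariant]
  [μ.IsNegInvariant]

lemma lintegral_neg_add_right (f : G → ℝ≥0∞) (y : G) :
    ∫⁻ x, f (-(x + y)) ∂μ = ∫⁻ x, f x ∂μ := by
  have h : ∀ x, -(x + y) = -y - x := fun x => by abel
  simp_rw [h]
  exact (Measure.measurePreserving_sub_left μ (-y)).lintegral_comp_emb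
    (MeasurableEquiv.subLeft (-y)).measurableEmbedding f

variable {μ} in
lemma AEMeasurable.comp_neg_add_right {e : G → ℝ≥0∞} (he : AEMeasurable e μ) (y : G) :
    AEMeasurable (fun x => e (-(x + y))) μ := by
  have h : ∀ x, -(x + y) = -y - x := fun x => by abel
  simp_rw [h]
  exact he.comp_quasiMeasurePreserving
    (Measure.measurePreserving_sub_left μ (-y)).quasiMeasurePreserving

variable {μ} {e₁ e₃ : G → ℝ≥0∞} in
lemma lintegral_mul_comp_neg_add_le (he₁ : AEMeasurable e₁ μ) (he₃ : AEMeasurable e₃ μ) (y : G) :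
    ∫⁻ x, e₁ x * e₃ (-(x + y)) ∂μ ≤ eLpNorm e₁ 2 μ * eLpNorm e₃ 2 μ := by
  calc ∫⁻ x, e₁ x * e₃ (-(x + y)) ∂μ
      ≤ (∫⁻ x, e₁ x ^ (2:ℝ) ∂μ) ^ (1/2:ℝ) * (∫⁻ x, e₃ (-(x + y)) ^ (2:ℝ) ∂μ) ^ (1/2:ℝ) :=
        ENNReal.lintegral_mul_le_Lp_mul_Lq μ Real.HolderConjugate.two_two he₁
          (he₃.comp_neg_add_right y)
    _ = eLpNorm e₁ 2 μ * eLpNorm e₃ 2 μ := by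
        rw [lintegral_neg_add_right μ (fun z => e₃ z ^ (2:ℝ)) y, eLpNorm_two_eq_lintegral_sq,
          eLpNorm_two_eq_lintegral_sq]

variable [SFinite μ]

lemma measurePreserving_prod_neg_sum :
    MeasurePreserving (fun q : G × G => (q.1, -(q.1 + q.2))) (μ.prod μ) (μ.prod μ) :=
  ((MeasurePreserving.id μ).prod (Measure.measurePreserving_neg μ)).comp
    (measurePreserving_prod_add μ μ)

lemma lintegral_prod_comp_neg_sum (f : G × G → ℝ≥0∞) :
    ∫⁻ q, f (q.1, -(q.1 + q.2)) ∂μ.prod μ = ∫⁻ q, f q ∂μ.prod μ :=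
  (measurePreserving_prod_neg_sum μ).lintegral_comp_emb
    ((MeasurableEquiv.shearAddRight G).trans
      ((MeasurableEquiv.refl G).prodCongr (MeasurableEquiv.neg G))).measurableEmbedding f

lemma trilinearLIntegral_comm_right (e₁ e₂ e₃ : G → ℝ≥0∞) :
    trilinearLIntegral μ e₁ e₂ e₃ = trilinearLIntegral μ e₁ e₃ e₂ := by
  rw [trilinearLIntegral, trilinearLIntegral, ← lintegral_prod_comp_neg_sum]
  refine lintegral_congr fun q => ?_
  rw [show -(q.1 + -(q.1 + q.2)) = q.2 by abel, mul_right_comm]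

variable {μ}

lemma AEMeasurable.comp_neg_sum {e : G → ℝ≥0∞} (he : AEMeasurable e μ) :
    AEMeasurable (fun q : G × G => e (-(q.1 + q.2))) (μ.prod μ) :=
  he.comp_quasiMeasurePreserving
    (Measure.quasiMeasurePreserving_snd.comp
      (measurePreserving_prod_neg_sum μ).quasiMeasurePreserving)

variable {e₁ e₂ e₃ : G → ℝ≥0∞}

lemma trilinearLIntegral_le_of_support_subset (he₁ : AEMeasurable e₁ μ)
    (he₂ : AEMeasurable e₂ μ) (he₃ : AEMeasurable e₃ μ) {S : Set G} (hS : support e₂ ⊆ S) :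
    trilinearLIntegral μ e₁ e₂ e₃ ≤
      eLpNorm e₁ 2 μ * eLpNorm e₂ 2 μ * eLpNorm e₃ 2 μ * μ S ^ (1/2:ℝ) := by
  have hprod : AEMeasurable (fun q : G × G => e₁ q.1 * e₂ q.2 * e₃ (-(q.1 + q.2))) (μ.prod μ) :=
    ((he₁.comp_quasiMeasurePreserving Measure.quasiMeasurePreserving_fst).mul
      (he₂.comp_quasiMeasurePreserving Measure.quasiMeasurePreserving_snd)).mul he₃.comp_neg_sum
  calc trilinearLIntegral μ e₁ e₂ e₃
      = ∫⁻ y, e₂ y * ∫⁻ x, e₁ x * e₃ (-(x + y)) ∂μ ∂μ := by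
        rw [trilinearLIntegral, lintegral_prod_symm _ hprod]
        refine lintegral_congr fun y => ?_
        have hm : AEMeasurable (fun x => e₁ x * e₃ (-(x + y))) μ :=
          he₁.mul (he₃.comp_neg_add_right y)
        rw [← lintegral_const_mul'' _ hm]
        exact lintegral_congr fun x => by ring
    _ ≤ ∫⁻ y, e₂ y * (eLpNorm e₁ 2 μ * eLpNorm e₃ 2 μ) ∂μ :=
        lintegral_mono fun y => by gcongr; exact lintegral_mul_comp_neg_add_le he₁ he₃ y
    _ = (∫⁻ y, e₂ y ∂μ) * (eLpNorm e₁ 2 μ * eLpNorm e₃ 2 μ) := lintegral_mul_const'' _ he₂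
    _ ≤ eLpNorm e₂ 2 μ * μ S ^ (1/2:ℝ) * (eLpNorm e₁ 2 μ * eLpNorm e₃ 2 μ) :=
        by gcongr; exact lintegral_le_eLpNorm_two_mul_measure_rpow he₂ hS
    _ = eLpNorm e₁ 2 μ * eLpNorm e₂ 2 μ * eLpNorm e₃ 2 μ * μ S ^ (1/2:ℝ) := by ring

lemma trilinearLIntegral_le_min (he₁ : AEMeasurable e₁ μ) (he₂ : AEMeasurable e₂ μ)
    (he₃ : AEMeasurable e₃ μ) {S₁ S₂ S₃ : Set G} (hS₁ : support e₁ ⊆ S₁)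
    (hS₂ : support e₂ ⊆ S₂) (hS₃ : support e₃ ⊆ S₃) :
    trilinearLIntegral μ e₁ e₂ e₃ ≤ eLpNorm e₁ 2 μ * eLpNorm e₂ 2 μ * eLpNorm e₃ 2 μ *
      min (μ S₁) (min (μ S₂) (μ S₃)) ^ (1/2:ℝ) := by
  set N := eLpNorm e₁ 2 μ * eLpNorm e₂ 2 μ * eLpNorm e₃ 2 μ
  have h₁ : trilinearLIntegral μ e₁ e₂ e₃ ≤ N * μ S₁ ^ (1/2:ℝ) :=
    (trilinearLIntegral_comm_left μ e₁ e₂ e₃).trans_le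
      ((trilinearLIntegral_le_of_support_subset he₂ he₁ he₃ hS₁).trans_eq (by ring))
  have h₂ : trilinearLIntegral μ e₁ e₂ e₃ ≤ N * μ S₂ ^ (1/2:ℝ) :=
    trilinearLIntegral_le_of_support_subset he₁ he₂ he₃ hS₂
  have h₃ : trilinearLIntegral μ e₁ e₂ e₃ ≤ N * μ S₃ ^ (1/2:ℝ) :=
    (trilinearLIntegral_comm_right μ e₁ e₂ e₃).trans_le
      ((trilinearLIntegral_le_of_support_subset he₁ he₃ he₂ hS₃).trans_eq (by ring))
  have hmono : Monotone fun t : ℝ≥0∞ => N * t ^ (1/2:ℝ) := fun a b hab =>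
    mul_le_mul_right (ENNReal.rpow_le_rpow hab (by norm_num)) N
  rw [hmono.map_min, hmono.map_min]
  exact le_min h₁ (le_min h₂ h₃)

lemma enorm_integral_trilinear_le {E : Type*} [NormedRing E] [NormMulClass E] [NormedSpace ℝ E]
    {η : G → G → E} {M : ℝ} (hM : ∀ x y, ‖η x y‖ ≤ M) {F₁ F₂ F₃ : G → E}
    (hF₁ : AEStronglyMeasurable F₁ μ) (hF₂ : AEStronglyMeasurable F₂ μ)
    (hF₃ : AEStronglyMeasurable F₃ μ) {S₁ S₂ S₃ : Set G} (hS₁ : support F₁ ⊆ S₁)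
    (hS₂ : support F₂ ⊆ S₂) (hS₃ : support F₃ ⊆ S₃) :
    ‖∫ q, η q.1 q.2 * F₁ q.1 * F₂ q.2 * F₃ (-(q.1 + q.2)) ∂μ.prod μ‖ₑ ≤
      ENNReal.ofReal M * (eLpNorm F₁ 2 μ * eLpNorm F₂ 2 μ * eLpNorm F₃ 2 μ *
        min (μ S₁) (min (μ S₂) (μ S₃)) ^ (1/2:ℝ)) := by
  have support_enorm : ∀ {F : G → E} {S : Set G}, support F ⊆ S → support (‖F ·‖ₑ) ⊆ S :=
    fun hS x hx => hS fun h => hx (by simp [h])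
  calc ‖∫ q, η q.1 q.2 * F₁ q.1 * F₂ q.2 * F₃ (-(q.1 + q.2)) ∂μ.prod μ‖ₑ
      ≤ ∫⁻ q, ‖η q.1 q.2 * F₁ q.1 * F₂ q.2 * F₃ (-(q.1 + q.2))‖ₑ ∂μ.prod μ :=
        enorm_integral_le_lintegral_enorm _
    _ ≤ ∫⁻ q, ENNReal.ofReal M * (‖F₁ q.1‖ₑ * ‖F₂ q.2‖ₑ * ‖F₃ (-(q.1 + q.2))‖ₑ) ∂μ.prod μ := by
        refine lintegral_mono fun q => ?_
        simp only [enorm_mul, mul_assoc]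
        gcongr
        rw [← ofReal_norm]
        exact ENNReal.ofReal_le_ofReal (hM _ _)
    _ = ENNReal.ofReal M * trilinearLIntegral μ (‖F₁ ·‖ₑ) (‖F₂ ·‖ₑ) (‖F₃ ·‖ₑ) :=
        lintegral_const_mul' _ _ ENNReal.ofReal_ne_top
    _ ≤ _ := by
        gcongr
        simpa only [eLpNorm_enorm] using trilinearLIntegral_le_min hF₁.enorm hF₂.enorm hF₃.enorm
          (support_enorm hS₁) (support_enorm hS₂) (support_enorm hS₃)

end Trilinear

lemma le_two_mul_of_mem_iSet {N ξ : ℝ} (h : ξ ∈ ISet N) : ξ ≤ 2 * N := by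
  unfold ISet at h
  split_ifs at h with hN
  · rw [hN]; linarith [h.2]
  · exact (le_abs_self ξ).trans h.2

lemma deltaSet_subset_Icc_prod_Icc {α : ℝ} (hα : 0 < α) (H : ℝ) :
    DeltaSet α H ⊆ Icc (-(2 * H) ^ (1/α)) ((2 * H) ^ (1/α)) ×ˢ
      Icc (-(2 * H) ^ (1/2:ℝ)) ((2 * H) ^ (1/2:ℝ)) := by
  intro ζ hζ
  have hsum : (α + 1) * |ζ.1| ^ α + ζ.2 ^ 2 ≤ 2 * H := le_two_mul_of_mem_iSet hζ
  have hpow₁ : 0 ≤ |ζ.1| ^ α := by positivity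
  have hpow₂ : 0 ≤ |ζ.2| ^ (2:ℝ) := by positivity
  have h₁ : |ζ.1| ^ α ≤ 2 * H := by nlinarith
  have h₂ : |ζ.2| ^ (2:ℝ) ≤ 2 * H := by
    rw [Real.rpow_two, sq_abs]; nlinarith
  rw [one_div, one_div]
  refine ⟨abs_le.1 ?_, abs_le.1 ?_⟩
  · exact (Real.le_rpow_inv_iff_of_pos (abs_nonneg _) (hpow₁.trans h₁) hα).2 h₁
  · exact (Real.le_rpow_inv_iff_of_pos (abs_nonneg _) (hpow₂.trans h₂) two_pos).2 h₂

lemma volume_deltaSet_le {α : ℝ} (hα : 0 < α) (H : ℝ) :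
    volume (DeltaSet α H) ≤
      ENNReal.ofReal (2 * (2 * H) ^ (1/α)) * ENNReal.ofReal (2 * (2 * H) ^ (1/2:ℝ)) := by
  refine (measure_mono (deltaSet_subset_Icc_prod_Icc hα H)).trans_eq ?_
  rw [Measure.volume_eq_prod, Measure.prod_prod, Real.volume_Icc, Real.volume_Icc]
  ring_nf

lemma rpow_half_rectangle_area_le {α H : ℝ} (hα : 1 ≤ α) (hH : 0 ≤ H) :
    (2 * (2 * H) ^ (1/α) * (2 * (2 * H) ^ (1/2:ℝ))) ^ (1/2:ℝ) ≤
      4 * H ^ (1 / (2 * α) + 1 / 4) := by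
  set p : ℝ := 1 / (2 * α) + 1 / 4
  have hp : p ≤ 1 := by
    have : 1 / (2 * α) ≤ 1 / 2 := one_div_le_one_div_of_le two_pos (by linarith)
    simp only [p]
    linarith
  have hsqrt4 : (4:ℝ) ^ (1/2:ℝ) = 2 := by
    rw [show (4:ℝ) = 2 ^ (2:ℝ) by norm_num, ← Real.rpow_mul zero_le_two]; norm_num
  have harea : 2 * (2 * H) ^ (1/α) * (2 * (2 * H) ^ (1/2:ℝ)) = 4 * (2 * H) ^ (2 * p) := by
    rw [mul_mul_mul_comm, ← Real.rpow_add' (by positivity) (by positivity)]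
    congr 2
    · norm_num
    · show 1 / α + 1 / 2 = 2 * (1 / (2 * α) + 1 / 4)
      ring
  calc (2 * (2 * H) ^ (1/α) * (2 * (2 * H) ^ (1/2:ℝ))) ^ (1/2:ℝ)
      = 2 * 2 ^ p * H ^ p := by
        rw [harea, Real.mul_rpow (by norm_num) (by positivity), hsqrt4,
          ← Real.rpow_mul (by positivity), Real.mul_rpow zero_le_two hH]
        ring_nf
    _ ≤ 2 * 2 * H ^ p := by
        gcongr
        exact (Real.rpow_le_rpow_of_exponent_le one_le_two hp).trans_eq (Real.rpow_one 2)
    _ = 4 * H ^ p := by ring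

lemma volume_deltaSet_rpow_le {α H : ℝ} (hα : 1 ≤ α) (hH : 0 ≤ H) :
    volume (DeltaSet α H) ^ (1/2:ℝ) ≤ ENNReal.ofReal (4 * H ^ (1 / (2 * α) + 1 / 4)) := by
  calc volume (DeltaSet α H) ^ (1/2:ℝ)
      ≤ (ENNReal.ofReal (2 * (2 * H) ^ (1/α) * (2 * (2 * H) ^ (1/2:ℝ)))) ^ (1/2:ℝ) := by
        rw [ENNReal.ofReal_mul (by positivity)]
        exact ENNReal.rpow_le_rpow (volume_deltaSet_le (by linarith) H) (by norm_num)
    _ ≤ _ := by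
        rw [ENNReal.ofReal_rpow_of_nonneg (by positivity) (by norm_num)]
        exact ENNReal.ofReal_le_ofReal (rpow_half_rectangle_area_le hα hH)

lemma IsDyadic.nonneg {x : ℝ} (hx : IsDyadic x) : 0 ≤ x := by
  obtain ⟨k, rfl⟩ := hx
  positivity

/-- By Parseval, with `F_i = f̂_i`,
`∫ Π_η(f₁,f₂) f₃ = ∫∫ η(ζ₁,ζ₂) F₁(ζ₁) F₂(ζ₂) F₃(-(ζ₁+ζ₂)) dζ₁ dζ₂`. -/
theorem stmt13 (α : ℝ) (hα : α ∈ Icc (1:ℝ) 2) :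
    ∃ C > (0:ℝ), ∀ η : (ℝ × ℝ) → (ℝ × ℝ) → ℂ,
      Measurable (Function.uncurry η) →
      ∀ M : ℝ, (∀ ζ₁ ζ₂, ‖η ζ₁ ζ₂‖ ≤ M) →
      ∀ H₁ H₂ H₃ : ℝ, IsDyadic H₁ → IsDyadic H₂ → IsDyadic H₃ →
      ∀ F₁ F₂ F₃ : ℝ × ℝ → ℂ,
      MemLp F₁ 2 volume → MemLp F₂ 2 volume → MemLp F₃ 2 volume →
      support F₁ ⊆ DeltaSet α H₁ → support F₂ ⊆ DeltaSet α H₂ →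
      support F₃ ⊆ DeltaSet α H₃ →
      ‖∫ q : (ℝ × ℝ) × (ℝ × ℝ), η q.1 q.2 * F₁ q.1 * F₂ q.2 * F₃ (-(q.1 + q.2))‖ ≤
        C * M * (min H₁ (min H₂ H₃)) ^ (1 / (2 * α) + 1 / 4)
          * (eLpNorm F₁ 2 volume).toReal * (eLpNorm F₂ 2 volume).toReal
          * (eLpNorm F₃ 2 volume).toReal := by
  refine ⟨4, by norm_num, fun η _ M hM H₁ H₂ H₃ hd₁ hd₂ hd₃ F₁ F₂ F₃ hF₁ hF₂ hF₃ hs₁ hs₂ hs₃ => ?_⟩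
  set Hmin := min H₁ (min H₂ H₃)
  have hM0 : 0 ≤ M := (norm_nonneg _).trans (hM 0 0)
  have hHmin : 0 ≤ Hmin := le_min hd₁.nonneg (le_min hd₂.nonneg hd₃.nonneg)
  have hvol : min (volume (DeltaSet α H₁)) (min (volume (DeltaSet α H₂)) (volume (DeltaSet α H₃)))
      ≤ volume (DeltaSet α Hmin) := by
    rcases min_choice H₂ H₃ with h | h <;> rcases min_choice H₁ (min H₂ H₃) with h' | h' <;>
      simp [Hmin, h, h']
  have hvol_rpow := (ENNReal.rpow_le_rpow hvol (by norm_num : (0:ℝ) ≤ 1/2)).trans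
    (volume_deltaSet_rpow_le hα.1 hHmin)
  set I := ∫ q : (ℝ × ℝ) × (ℝ × ℝ), η q.1 q.2 * F₁ q.1 * F₂ q.2 * F₃ (-(q.1 + q.2))
  set B := ENNReal.ofReal M * (eLpNorm F₁ 2 volume * eLpNorm F₂ 2 volume *
      eLpNorm F₃ 2 volume * ENNReal.ofReal (4 * Hmin ^ (1 / (2 * α) + 1 / 4)))
  have key : ‖I‖ₑ ≤ B := by
    refine (enorm_integral_trilinear_le hM hF₁.1 hF₂.1 hF₃.1 hs₁ hs₂ hs₃).trans ?_
    exact mul_le_mul_right (mul_le_mul_right hvol_rpow _) _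
  have hfin : B ≠ ⊤ := by
    have := hF₁.eLpNorm_ne_top; have := hF₂.eLpNorm_ne_top; have := hF₃.eLpNorm_ne_top
    finiteness
  calc ‖I‖ = (‖I‖ₑ).toReal := (toReal_enorm _).symm
    _ ≤ B.toReal := ENNReal.toReal_mono hfin key
    _ = _ := by
        simp only [B, ENNReal.toReal_mul, ENNReal.toReal_ofReal hM0,
          ENNReal.toReal_ofReal (by positivity : 0 ≤ 4 * Hmin ^ (1 / (2 * α) + 1 / 4))]
        ring
end
end

section
/- Let α ∈ [1,2]. There exist constants c, C, N₀ > 0 depending only on α such that for all N ≥ N₀, all γ ∈ (0,1], all ξ₁ ∈ [γ/2, γ] and all ξ₂ ∈ [N, N+γ], one has c · γ N^α ≤ |(ξ₁+ξ₂)|ξ₁+ξ₂|^α − ξ₁|ξ₁|^α − ξ₂|ξ₂|^α| ≤ C · γ N^α. -/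
open Set

noncomputable section

/-! For positive frequencies the quantity is `(a + b) ^ p - a ^ p - b ^ p` with `p = α + 1`.
The tangent-line inequality for the convex function `x ↦ x ^ p`, taken at `b` and at `a + b`,
traps it between `p a b ^ α - a ^ p` and `p a (a + b) ^ α`. With `a ≈ γ ≤ 1` and `b ≈ N ≥ 2`
both bounds are comparable to `γ N ^ α`, the correction `a ^ p ≤ γ` being absorbed by `N ^ α ≥ 2`. -/

theorem Real.rpow_add_mul_rpow_sub_one_mul_sub_le {x y p : ℝ} (hx : 0 ≤ x) (hy : 0 < y)
    (hp : 1 ≤ p) : y ^ p + p * y ^ (p - 1) * (x - y) ≤ x ^ p := by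
  have hs : -1 ≤ x / y - 1 := by have := div_nonneg hx hy.le; linarith
  have bernoulli := one_add_mul_self_le_rpow_one_add hs hp
  rw [add_sub_cancel, Real.div_rpow hx hy.le, le_div_iff₀ (by positivity)] at bernoulli
  calc y ^ p + p * y ^ (p - 1) * (x - y) = (1 + p * (x / y - 1)) * y ^ p := by
        rw [Real.rpow_sub_one hy.ne']; field_simp
    _ ≤ x ^ p := bernoulli

theorem Real.mul_abs_rpow_of_pos {x : ℝ} (hx : 0 < x) (α : ℝ) : x * |x| ^ α = x ^ (α + 1) := by
  rw [abs_of_pos hx, Real.rpow_add_one hx.ne', mul_comm]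

section PowerSum

variable {α a b : ℝ}

theorem le_add_rpow_sub_rpow_sub_rpow (hα : 0 ≤ α) (ha : 0 ≤ a) (hb : 0 < b) :
    (α + 1) * a * b ^ α - a ^ (α + 1) ≤ (a + b) ^ (α + 1) - a ^ (α + 1) - b ^ (α + 1) := by
  have tangent := Real.rpow_add_mul_rpow_sub_one_mul_sub_le (add_nonneg ha hb.le) hb
    (by linarith : 1 ≤ α + 1)
  rw [add_sub_cancel_right, add_sub_cancel_right] at tangent
  linarith

theorem add_rpow_sub_rpow_sub_rpow_le (hα : 0 ≤ α) (ha : 0 ≤ a) (hb : 0 < b) :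
    (a + b) ^ (α + 1) - a ^ (α + 1) - b ^ (α + 1) ≤ (α + 1) * a * (a + b) ^ α := by
  have tangent := Real.rpow_add_mul_rpow_sub_one_mul_sub_le (y := a + b) hb.le (by linarith)
    (by linarith : 1 ≤ α + 1)
  rw [add_sub_cancel_right] at tangent
  have ha_pow : 0 ≤ a ^ (α + 1) := Real.rpow_nonneg ha _
  linarith

end PowerSum

section HighLowFrequencies

variable {α N γ ξ₁ ξ₂ : ℝ}

theorem half_mul_rpow_le_add_rpow_sub_rpow_sub_rpow (hα : 1 ≤ α) (hN : 2 ≤ N)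
    (hγ : γ ∈ Ioc 0 1) (hξ₁ : ξ₁ ∈ Icc (γ / 2) γ) (hξ₂ : N ≤ ξ₂) :
    1 / 2 * γ * N ^ α ≤ (ξ₁ + ξ₂) ^ (α + 1) - ξ₁ ^ (α + 1) - ξ₂ ^ (α + 1) := by
  obtain ⟨hγ0, hγ1⟩ := hγ
  obtain ⟨hξ₁l, hξ₁r⟩ := hξ₁
  have hξ₁0 : 0 ≤ ξ₁ := by linarith
  have hNα : 2 ≤ N ^ α := hN.trans (Real.self_le_rpow_of_one_le (by linarith) hα)
  have hmain : γ * N ^ α ≤ (α + 1) * ξ₁ * ξ₂ ^ α := by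
    have hfactor : γ ≤ (α + 1) * ξ₁ := by nlinarith
    gcongr
  have hsmall : ξ₁ ^ (α + 1) ≤ γ :=
    (Real.rpow_le_self_of_le_one hξ₁0 (by linarith) (by linarith)).trans hξ₁r
  have hbound := le_add_rpow_sub_rpow_sub_rpow (by linarith : 0 ≤ α) hξ₁0 (by linarith : 0 < ξ₂)
  nlinarith

theorem add_rpow_sub_rpow_sub_rpow_le_twelve_mul_rpow (hα : α ∈ Icc (0 : ℝ) 2) (hN : 2 ≤ N)
    (hγ : γ ≤ 1) (hξ₁ : ξ₁ ∈ Icc 0 γ) (hξ₂ : ξ₂ ∈ Icc N (N + γ)) :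
    (ξ₁ + ξ₂) ^ (α + 1) - ξ₁ ^ (α + 1) - ξ₂ ^ (α + 1) ≤ 12 * γ * N ^ α := by
  obtain ⟨hα0, hα2⟩ := hα
  obtain ⟨hξ₁l, hξ₁r⟩ := hξ₁
  obtain ⟨hξ₂l, hξ₂r⟩ := hξ₂
  have hsum : (ξ₁ + ξ₂) ^ α ≤ 4 * N ^ α := calc
    (ξ₁ + ξ₂) ^ α ≤ (2 * N) ^ α := Real.rpow_le_rpow (by linarith) (by linarith) hα0
    _ = 2 ^ α * N ^ α := Real.mul_rpow (by norm_num) (by linarith)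
    _ ≤ 2 ^ (2 : ℝ) * N ^ α := by gcongr; norm_num
    _ = 4 * N ^ α := by norm_num
  have hfactor : (α + 1) * ξ₁ ≤ 3 * γ := by nlinarith
  have hγ0 : 0 ≤ γ := hξ₁l.trans hξ₁r
  calc (ξ₁ + ξ₂) ^ (α + 1) - ξ₁ ^ (α + 1) - ξ₂ ^ (α + 1) ≤ (α + 1) * ξ₁ * (ξ₁ + ξ₂) ^ α :=
        add_rpow_sub_rpow_sub_rpow_le hα0 hξ₁l (by linarith)
    _ ≤ 3 * γ * (4 * N ^ α) := by
        have hsum_nonneg := Real.rpow_nonneg (by linarith : 0 ≤ ξ₁ + ξ₂) α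
        gcongr
    _ = 12 * γ * N ^ α := by ring

end HighLowFrequencies

theorem stmt18 (α : ℝ) (hα : α ∈ Icc (1:ℝ) 2) :
    ∃ c > (0:ℝ), ∃ C > (0:ℝ), ∃ N₀ > (0:ℝ), ∀ N : ℝ, N₀ ≤ N →
      ∀ γ : ℝ, γ ∈ Ioc (0:ℝ) 1 → ∀ ξ₁ ∈ Icc (γ / 2) γ, ∀ ξ₂ ∈ Icc N (N + γ),
      c * γ * N ^ α ≤
        |(ξ₁ + ξ₂) * |ξ₁ + ξ₂| ^ α - ξ₁ * |ξ₁| ^ α - ξ₂ * |ξ₂| ^ α| ∧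
      |(ξ₁ + ξ₂) * |ξ₁ + ξ₂| ^ α - ξ₁ * |ξ₁| ^ α - ξ₂ * |ξ₂| ^ α| ≤
        C * γ * N ^ α := by
  refine ⟨1 / 2, by norm_num, 12, by norm_num, 2, by norm_num, ?_⟩
  intro N hN γ hγ ξ₁ hξ₁ ξ₂ hξ₂
  have hξ₁0 : 0 < ξ₁ := by linarith [hγ.1, hξ₁.1]
  have hξ₂0 : 0 < ξ₂ := by linarith [hξ₂.1]
  rw [Real.mul_abs_rpow_of_pos (add_pos hξ₁0 hξ₂0), Real.mul_abs_rpow_of_pos hξ₁0,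
    Real.mul_abs_rpow_of_pos hξ₂0]
  have hlower := half_mul_rpow_le_add_rpow_sub_rpow_sub_rpow hα.1 hN hγ hξ₁ hξ₂.1
  have hupper := add_rpow_sub_rpow_sub_rpow_le_twelve_mul_rpow ⟨by linarith [hα.1], hα.2⟩ hN hγ.2
    ⟨hξ₁0.le, hξ₁.2⟩ hξ₂
  have hnonneg : 0 ≤ 1 / 2 * γ * N ^ α := by have hγ0 := hγ.1; positivity
  rw [abs_of_nonneg (hnonneg.trans hlower)]
  exact ⟨hlower, hupper⟩
end
end
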